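/- arXiv:2501.12158 — 3 statements merged into one kernel-verified Lean document; each statement's English description precedes it below -/
import Mathlib

section
/- Assume F ⊆ Hom(S¹) and that the collection K_F of F-invariant minimal sets is finite. Then for every x ∈ S¹ there exist K₁, K₂ ∈ K_F such that the orbit O_F(x) does not intersect any element of K_F \ {K₁, K₂}. -/
/-!
If the orbit of `x` met three distinct, hence pairwise disjoint, minimal sets `K₁, K₂, K₃`,
pick `gᵢ` in the semigroup with `gᵢ x ∈ Kᵢ`; then `x` lies in none of them. Since `gᵢ` preserves
the disjoint closed sets `Kᵢ` and `Kⱼ`, it has a periodic point `q`: a recurrent point of `Kⱼ`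
stays in one component of `S¹ \ Kᵢ`, which `gᵢ⁻ᴺ` maps into itself, and the intermediate value
theorem gives a fixed point in its closure. An iterate `ν` of `gᵢ` fixes `q` and is increasing in
the coordinate `S¹ \ {q} ≅ (0,1)`, so the orbit of `x` under `ν` converges monotonically to a point
`ℓᵢ ∈ Kᵢ` which attracts the whole arc between `x` and `ℓᵢ`; hence that arc misses every other
minimal set. Two of the three arcs leave `x` on the same side, and then one of them contains the
endpoint of the other, a point of a different minimal set.
-/

open MeasureTheory Set Function Filter Topology
open scoped ENNReal NNReal

noncomputable section

/-- The circle, modeled as `ℝ/ℤ`, with its (arc-length) quotient metric. -/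
abbrev S1 : Type := AddCircle (1 : ℝ)

/-- The representative in `[0,1)` of a point of the circle. -/
def argS1 (x : S1) : ℝ := (AddCircle.equivIco 1 0 x : ℝ)

/-- The open arc traversed counterclockwise from `a` to `b`. -/
def openArc (a b : S1) : Set S1 := {x | 0 < argS1 (x - a) ∧ argS1 (x - a) < argS1 (b - a)}

/-- The closed arc traversed counterclockwise from `a` to `b`; note `[a,a] = {a}`. -/
def closedArc (a b : S1) : Set S1 := insert a (insert b (openArc a b))

/-- Homeomorphisms of the circle. -/
abbrev HomS1 : Type := S1 ≃ₜ S1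

/-- A circle homeomorphism is orientation preserving if it maps counterclockwise open
arcs onto counterclockwise open arcs. -/
def OrientationPreserving (f : HomS1) : Prop :=
  ∀ a b : S1, f '' openArc a b = openArc (f a) (f b)

/-- Membership in the semigroup generated by `F` (all finite compositions of members). -/
inductive InSemigroup (F : Set HomS1) : HomS1 → Prop
  | base : ∀ f ∈ F, InSemigroup F f
  | comp : ∀ f g : HomS1, InSemigroup F f → InSemigroup F g → InSemigroup F (g.trans f)

/-- The semigroup `G_F` generated by `F`, as a set of homeomorphisms. -/
def semigroupOf (F : Set HomS1) : Set HomS1 := {g | InSemigroup F g}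

/-- The orbit of `x` under the semigroup generated by `F`. -/
def orbitOf (F : Set HomS1) (x : S1) : Set S1 := {y | ∃ g ∈ semigroupOf F, g x = y}

/-- The semigroup generated by `F` has no finite orbit. -/
def NoFiniteOrbit (F : Set HomS1) : Prop := ∀ x : S1, (orbitOf F x).Infinite

/-- A set `K` is `F`-invariant if every `f ∈ F` maps it into itself. -/
def InvariantUnder (F : Set HomS1) (K : Set S1) : Prop := ∀ f ∈ F, f '' K ⊆ K

/-- A nonempty closed `F`-invariant set having no nonempty closed `F`-invariant
proper subset. -/
def IsMinimalInvariant (F : Set HomS1) (K : Set S1) : Prop :=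
  K.Nonempty ∧ IsClosed K ∧ InvariantUnder F K ∧
    ∀ K' ⊆ K, K'.Nonempty → IsClosed K' → InvariantUnder F K' → K' = K

/-- The collection `K_F` of `F`-invariant minimal sets. -/
def minimalSets (F : Set HomS1) : Set (Set S1) := {K | IsMinimalInvariant F K}

/-- The semigroup generated by `F` acts proximally on `I`. -/
def ProximalOn (F : Set HomS1) (I : Set S1) : Prop :=
  ∀ x ∈ I, ∀ y ∈ I, ∃ g : ℕ → HomS1, (∀ n, g n ∈ semigroupOf F) ∧
    Tendsto (fun n => dist (g n x) (g n y)) atTop (𝓝 0)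

/-- `L` is a finite union of closed arcs with endpoints in `K`. -/
def FiniteUnionOfArcsWithEndsIn (K L : Set S1) : Prop :=
  ∃ (n : ℕ) (a b : Fin n → S1), (∀ k, a k ∈ K) ∧ (∀ k, b k ∈ K) ∧
    L = ⋃ k, closedArc (a k) (b k)

/-- `L` is a finite union of closed arcs. -/
def FiniteUnionOfClosedArcs (L : Set S1) : Prop :=
  ∃ (n : ℕ) (a b : Fin n → S1), L = ⋃ k, closedArc (a k) (b k)

/-- The number of connected components of `L ⊆ S¹`. -/
def numComponents (L : Set S1) : ℕ :=
  {C : Set S1 | ∃ x ∈ L, C = connectedComponentIn L x}.ncard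

/-- `x` precedes `y` in the counterclockwise order of an arc starting at `a`. -/
def arcLE (a x y : S1) : Prop := argS1 (x - a) ≤ argS1 (y - a)

/-- `u` is monotone increasing on the closed arc `[a,b]` (counterclockwise order). -/
def MonotoneIncrOnArc (u : S1 → ℝ) (a b : S1) : Prop :=
  ∀ x ∈ closedArc a b, ∀ y ∈ closedArc a b, arcLE a x y → u x ≤ u y

/-- `u` is monotone decreasing on the closed arc `[a,b]` (counterclockwise order). -/
def MonotoneDecrOnArc (u : S1 → ℝ) (a b : S1) : Prop :=
  ∀ x ∈ closedArc a b, ∀ y ∈ closedArc a b, arcLE a x y → u y ≤ u x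

/-- A closed arc with endpoints in the minimal set `K` and disjoint from every other
minimal set of `F`. -/
def IsGapArc (F : Set HomS1) (K I : Set S1) : Prop :=
  (∃ x ∈ K, ∃ y ∈ K, I = closedArc x y) ∧
    ∀ K' ∈ minimalSets F, K' ≠ K → I ∩ K' = ∅

/-- The family `E_K`: the maximal closed arcs with endpoints in `K` whose union is
disjoint from every other minimal set. -/
def EK (F : Set HomS1) (K : Set S1) : Set (Set S1) :=
  {I | IsGapArc F K I ∧ ∀ J, IsGapArc F K J → I ⊆ J → J = I}

open Metric

section CircleCoordinates

theorem argS1_mem_Ico (z : S1) : argS1 z ∈ Ico (0 : ℝ) 1 := by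
  simpa [argS1] using (AddCircle.equivIco 1 0 z).2

@[simp]
theorem coe_argS1 (z : S1) : ((argS1 z : ℝ) : S1) = z :=
  (AddCircle.equivIco 1 0).symm_apply_apply z

theorem argS1_coe_of_mem {r : ℝ} (hr : r ∈ Ico (0 : ℝ) 1) : argS1 (r : S1) = r := by
  have := AddCircle.equivIco_coe_eq (p := (1 : ℝ)) (a := 0) (x := r) (by simpa using hr)
  simp [argS1, this]

@[simp]
theorem argS1_zero : argS1 0 = 0 := by
  simpa using argS1_coe_of_mem (r := 0) (by simp)

theorem argS1_injective : Injective argS1 :=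
  fun z w h => by rw [← coe_argS1 z, h, coe_argS1]

theorem argS1_pos_iff {z : S1} : 0 < argS1 z ↔ z ≠ 0 := by
  rw [(argS1_mem_Ico z).1.lt_iff_ne', ne_eq, ← argS1_zero, argS1_injective.eq_iff]

theorem continuousAt_argS1 {z : S1} (hz : z ≠ 0) : ContinuousAt argS1 z :=
  continuous_subtype_val.continuousAt.comp
    (AddCircle.continuousAt_equivIco 1 0 (by simpa using hz))

theorem argS1_sub_of_le {z y : S1} (h : argS1 y ≤ argS1 z) :
    argS1 (z - y) = argS1 z - argS1 y := by
  conv_lhs => rw [← coe_argS1 z, ← coe_argS1 y, ← AddCircle.coe_sub]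
  exact argS1_coe_of_mem ⟨sub_nonneg.2 h, by linarith [(argS1_mem_Ico z).2, (argS1_mem_Ico y).1]⟩

theorem isOpen_preimage_argS1 {U : Set ℝ} (hU : IsOpen U) (h0 : (0 : ℝ) ∉ U) :
    IsOpen (argS1 ⁻¹' U) := by
  refine isOpen_iff_mem_nhds.2 fun z hz => continuousAt_argS1 ?_ (hU.mem_nhds hz)
  rintro rfl
  exact h0 (by simpa using hz)

theorem coe_ne_zero_of_mem_Ioo {t : ℝ} (ht : t ∈ Ioo (0 : ℝ) 1) : (t : S1) ≠ 0 := by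
  rw [← argS1_pos_iff, argS1_coe_of_mem (Ioo_subset_Ico_self ht)]
  exact ht.1

theorem continuous_add_coe (q : S1) : Continuous fun t : ℝ => q + (t : S1) :=
  continuous_const.add (AddCircle.continuous_mk' 1)

theorem exists_coe_eq_abs_eq_norm (z : S1) : ∃ r : ℝ, (r : S1) = z ∧ |r| = ‖z‖ := by
  obtain ⟨r, rfl⟩ := QuotientAddGroup.mk_surjective z
  refine ⟨r - round r, ?_, ?_⟩
  · simp
  · simp [AddCircle.norm_eq]

theorem norm_coe_le_abs (r : ℝ) : ‖(r : S1)‖ ≤ |r| :=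
  QuotientAddGroup.norm_mk_le_norm

end CircleCoordinates

section Arcs

theorem mem_openArc_iff' {a b w : S1} :
    w ∈ openArc a b ↔ 0 < argS1 (b - w) ∧ argS1 (b - w) < argS1 (b - a) := by
  have key : ∀ u v : S1, 0 < argS1 u → argS1 u < argS1 (u + v) →
      0 < argS1 v ∧ argS1 v < argS1 (u + v) := by
    intro u v h0 h1
    have : argS1 v = argS1 (u + v) - argS1 u := by
      rw [← argS1_sub_of_le h1.le, add_sub_cancel_left]
    constructor <;> linarith
  have hsum : b - a = (w - a) + (b - w) := by abel
  simp only [openArc, mem_ofPred_eq]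
  constructor
  · rintro ⟨h0, h1⟩
    rw [hsum] at h1 ⊢
    exact key _ _ h0 h1
  · rintro ⟨h0, h1⟩
    rw [hsum, add_comm] at h1 ⊢
    exact key _ _ h0 h1

theorem openArc_subset_image_Ioo (q : S1) {s t : ℝ} (hst : s ≤ t) (hts : t < s + 1) :
    openArc (q + s) (q + t) ⊆ (fun u : ℝ => q + u) '' Ioo s t := by
  rintro w ⟨h0, h1⟩
  have hd : argS1 (q + t - (q + s)) = t - s := by
    rw [show q + (t : S1) - (q + s) = ((t - s : ℝ) : S1) by rw [AddCircle.coe_sub]; abel]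
    exact argS1_coe_of_mem ⟨by linarith, by linarith⟩
  rw [hd] at h1
  refine ⟨s + argS1 (w - (q + s)), ⟨by linarith, by linarith⟩, ?_⟩
  change q + ((s + argS1 (w - (q + s)) : ℝ) : S1) = w
  rw [AddCircle.coe_add, ← add_assoc, coe_argS1]
  abel

/-- The open arc from `x` to `ℓ` (`b = true`) or from `ℓ` to `x` (`b = false`). -/
def sideArc : Bool → S1 → S1 → Set S1
  | true, x, ℓ => openArc x ℓ
  | false, x, ℓ => openArc ℓ x

theorem mem_sideArc_or_mem_sideArc (b : Bool) {x ℓ₁ ℓ₂ : S1} (h₁ : ℓ₁ ≠ x) (h₂ : ℓ₂ ≠ x)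
    (h : ℓ₁ ≠ ℓ₂) : ℓ₁ ∈ sideArc b x ℓ₂ ∨ ℓ₂ ∈ sideArc b x ℓ₁ := by
  cases b
  · simp only [sideArc, mem_openArc_iff']
    have hpos : ∀ {ℓ}, ℓ ≠ x → 0 < argS1 (x - ℓ) := fun h => argS1_pos_iff.2 (sub_ne_zero.2 h.symm)
    exact ((argS1_injective.comp (sub_right_injective (b := x))).ne h).lt_or_gt.imp
      (⟨hpos h₁, ·⟩) (⟨hpos h₂, ·⟩)
  · simp only [sideArc, openArc, mem_ofPred_eq]
    have hpos : ∀ {ℓ}, ℓ ≠ x → 0 < argS1 (ℓ - x) := fun h => argS1_pos_iff.2 (sub_ne_zero.2 h)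
    exact ((argS1_injective.comp (sub_left_injective (b := x))).ne h).lt_or_gt.imp
      (⟨hpos h₁, ·⟩) (⟨hpos h₂, ·⟩)

theorem exists_notMem_closure_of_isPreconnected {S : Set S1} (hS : IsPreconnected S)
    {a₁ a₂ : S1} (h₁ : a₁ ∉ S) (h₂ : a₂ ∉ S) (ha : a₁ ≠ a₂) : ∃ c, c ∉ closure S := by
  set θ : S1 → ℝ := fun w => argS1 (w - a₁)
  set r := θ a₂
  have hr : r ∈ Ioo (0 : ℝ) 1 := ⟨argS1_pos_iff.2 (sub_ne_zero.2 ha.symm), (argS1_mem_Ico _).2⟩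
  have hopen : ∀ {s t : ℝ}, 0 ≤ s → IsOpen (θ ⁻¹' Ioo s t) :=
    fun hs => (isOpen_preimage_argS1 isOpen_Ioo fun h => (hs.trans_lt h.1).false).preimage
      (continuous_sub_right a₁)
  have hcover : S ⊆ θ ⁻¹' Ioo 0 r ∪ θ ⁻¹' Ioo r 1 := by
    intro w hw
    have hne : θ w ≠ r := fun h => h₂ (sub_left_injective (argS1_injective h) ▸ hw)
    have hpos : 0 < θ w := argS1_pos_iff.2 (sub_ne_zero.2 (ne_of_mem_of_not_mem hw h₁))
    rcases hne.lt_or_gt with hlt | hlt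
    · exact Or.inl ⟨hpos, hlt⟩
    · exact Or.inr ⟨hlt, (argS1_mem_Ico _).2⟩
  have hdisj : Disjoint (θ ⁻¹' Ioo 0 r) (θ ⁻¹' Ioo r 1) :=
    disjoint_left.2 fun _ h h' => (h.2.trans h'.1).false
  have hθ : ∀ {t : ℝ}, t ∈ Ioo (0 : ℝ) 1 → θ (a₁ + t) = t := fun ht => by
    simp only [θ, add_sub_cancel_left]
    exact argS1_coe_of_mem (Ioo_subset_Ico_self ht)
  rcases hS.subset_or_subset (hopen le_rfl) (hopen hr.1.le) hdisj hcover with hS | hS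
  · have hc : (r + 1) / 2 ∈ Ioo r 1 := ⟨by linarith [hr.2], by linarith [hr.2]⟩
    refine ⟨a₁ + ((r + 1) / 2 : ℝ), fun hmem => ?_⟩
    refine disjoint_left.1 ((hdisj.mono_left hS).closure_left (hopen hr.1.le)) hmem ?_
    rwa [mem_preimage, hθ ⟨hr.1.trans hc.1, hc.2⟩]
  · have hc : r / 2 ∈ Ioo 0 r := ⟨by linarith [hr.1], by linarith [hr.1]⟩
    refine ⟨a₁ + (r / 2 : ℝ), fun hmem => ?_⟩
    refine disjoint_left.1 ((hdisj.symm.mono_left hS).closure_left (hopen le_rfl)) hmem ?_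
    rwa [mem_preimage, hθ ⟨hc.1, hc.2.trans hr.2⟩]

end Arcs

section IterateLimit

variable {α : Type*} [ConditionallyCompleteLinearOrder α] {φ : α → α} {a b : α}

theorem MonotoneOn.iterate_le_iterate (hmono : MonotoneOn φ (Ioo a b))
    (hmaps : MapsTo φ (Ioo a b) (Ioo a b)) {s s' : α} (hs : s ∈ Ioo a b) (hs' : s' ∈ Ioo a b)
    (hle : s ≤ s') (n : ℕ) : φ^[n] s ≤ φ^[n] s' := by
  induction n with
  | zero => exact hle
  | succ n ih =>
    rw [iterate_succ_apply', iterate_succ_apply']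
    exact hmono (hmaps.iterate n hs) (hmaps.iterate n hs') ih

variable [TopologicalSpace α] [OrderTopology α]

theorem exists_tendsto_iterate_of_lt_apply (hmono : MonotoneOn φ (Ioo a b))
    (hmaps : MapsTo φ (Ioo a b) (Ioo a b)) (hcont : ContinuousOn φ (Ioo a b)) {t₀ : α}
    (ht₀ : t₀ ∈ Ioo a b) (hlt : t₀ < φ t₀) :
    ∃ L, t₀ < L ∧ L ≤ b ∧ ∀ s ∈ Ico t₀ L, Tendsto (fun n => φ^[n] s) atTop (𝓝 L) := by
  have horbit : Monotone fun n => φ^[n] t₀ := monotone_nat_of_le_succ fun n => by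
    rw [iterate_succ_apply]
    exact hmono.iterate_le_iterate hmaps ht₀ (hmaps ht₀) hlt.le n
  have hbdd : BddAbove (range fun n => φ^[n] t₀) :=
    ⟨b, forall_mem_range.2 fun n => (hmaps.iterate n ht₀).2.le⟩
  set L := ⨆ n, φ^[n] t₀
  have hT : Tendsto (fun n => φ^[n] t₀) atTop (𝓝 L) := tendsto_atTop_ciSup horbit hbdd
  have ht₀L : t₀ < L := hlt.trans_le (le_ciSup hbdd 1)
  have hLb : L ≤ b := ciSup_le fun n => (hmaps.iterate n ht₀).2.le
  refine ⟨L, ht₀L, hLb, fun s hs => ?_⟩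
  have hsab : s ∈ Ioo a b := ⟨ht₀.1.trans_le hs.1, hs.2.trans_le hLb⟩
  have hupper : ∀ n, φ^[n] s ≤ L := by
    rcases hLb.lt_or_eq with hLb | rfl
    · have hL : L ∈ Ioo a b := ⟨ht₀.1.trans ht₀L, hLb⟩
      have hfix : φ L = L := tendsto_nhds_unique
        ((hcont.continuousAt (isOpen_Ioo.mem_nhds hL)).tendsto.comp hT)
        (by simpa only [comp_def, ← iterate_succ_apply' φ] using hT.comp (tendsto_add_atTop_nat 1))
      intro n
      simpa only [iterate_fixed hfix] using hmono.iterate_le_iterate hmaps hsab hL hs.2.le n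
    · exact fun n => (hmaps.iterate n hsab).2.le
  exact tendsto_of_tendsto_of_tendsto_of_le_of_le hT tendsto_const_nhds
    (fun n => hmono.iterate_le_iterate hmaps ht₀ hsab hs.1 n) hupper

theorem exists_tendsto_iterate_of_apply_lt (hmono : MonotoneOn φ (Ioo a b))
    (hmaps : MapsTo φ (Ioo a b) (Ioo a b)) (hcont : ContinuousOn φ (Ioo a b)) {t₀ : α}
    (ht₀ : t₀ ∈ Ioo a b) (hlt : φ t₀ < t₀) :
    ∃ L, L < t₀ ∧ a ≤ L ∧ ∀ s ∈ Ioc L t₀, Tendsto (fun n => φ^[n] s) atTop (𝓝 L) :=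
  let ⟨L, hL, haL, hconv⟩ := exists_tendsto_iterate_of_lt_apply (α := αᵒᵈ)
    (a := OrderDual.toDual b) (b := OrderDual.toDual a)
    (fun _ hx _ hy hxy => hmono ⟨hy.2, hy.1⟩ ⟨hx.2, hx.1⟩ hxy)
    (fun _ hx => ⟨(hmaps ⟨hx.2, hx.1⟩).2, (hmaps ⟨hx.2, hx.1⟩).1⟩)
    (by rw [Ioo_toDual]; exact hcont) ⟨ht₀.2, ht₀.1⟩ hlt
  ⟨L, hL, haL, fun s hs => hconv s ⟨hs.2, hs.1⟩⟩

end IterateLimit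

section Chart

/-- `f` read in the coordinate `t ↦ q + t`, whose inverse on `S¹ \ {q}` is `w ↦ argS1 (w - q)`. -/
def chartMap (f : S1 → S1) (q : S1) (t : ℝ) : ℝ := argS1 (f (q + t) - q)

@[simp]
theorem add_coe_chartMap (f : S1 → S1) (q : S1) (t : ℝ) :
    q + (chartMap f q t : S1) = f (q + t) := by
  simp [chartMap]

theorem semiconj_chartMap (f : S1 → S1) (q : S1) :
    Semiconj (fun t : ℝ => q + (t : S1)) (chartMap f q) f :=
  add_coe_chartMap f q

theorem chartMap_comp (f g : S1 → S1) (q : S1) :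
    chartMap (f ∘ g) q = chartMap f q ∘ chartMap g q := by
  funext t
  simp [chartMap]

variable {f : S1 → S1} {q : S1}

theorem mapsTo_chartMap (hf : Injective f) (hq : f q = q) :
    MapsTo (chartMap f q) (Ioo 0 1) (Ioo 0 1) := fun t ht =>
  ⟨argS1_pos_iff.2 <| sub_ne_zero.2 fun h =>
    coe_ne_zero_of_mem_Ioo ht (by simpa using hf (h.trans hq.symm)), (argS1_mem_Ico _).2⟩

theorem continuousOn_chartMap (hf : Continuous f) (hf' : Injective f) (hq : f q = q) :
    ContinuousOn (chartMap f q) (Ioo 0 1) := fun _ ht =>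
  ((continuousAt_argS1 (argS1_pos_iff.1 (mapsTo_chartMap hf' hq ht).1)).comp
    (f := fun s : ℝ => f (q + s) - q)
    ((hf.comp (continuous_add_coe _)).sub continuous_const).continuousAt
    ).continuousWithinAt

theorem injOn_chartMap (hf : Injective f) : InjOn (chartMap f q) (Ioo 0 1) := by
  intro s hs t ht h
  have := hf (sub_left_injective (argS1_injective h))
  rw [← argS1_coe_of_mem (Ioo_subset_Ico_self hs), ← argS1_coe_of_mem (Ioo_subset_Ico_self ht),
    add_left_cancel this]

end Chart

section CircleDynamics

theorem exists_attracting_sideArc {ν : S1 → S1} {φ : ℝ → ℝ} {q : S1}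
    (hconj : Semiconj (fun t : ℝ => q + (t : S1)) φ ν) (hmono : MonotoneOn φ (Ioo 0 1))
    (hmaps : MapsTo φ (Ioo 0 1) (Ioo 0 1)) (hcont : ContinuousOn φ (Ioo 0 1))
    {t₀ : ℝ} (ht₀ : t₀ ∈ Ioo 0 1) (hne : φ t₀ ≠ t₀) :
    ∃ ℓ b, ∀ w ∈ insert (q + t₀ : S1) (sideArc b (q + t₀) ℓ),
      Tendsto (fun n => ν^[n] w) atTop (𝓝 ℓ) := by
  have hlim : ∀ {s L : ℝ}, Tendsto (fun n => φ^[n] s) atTop (𝓝 L) →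
      Tendsto (fun n => ν^[n] (q + s)) atTop (𝓝 (q + L)) := fun {s L} h => by
    simpa only [comp_def, (hconj.iterate_right _).eq] using
      ((continuous_add_coe q).tendsto L).comp h
  rcases hne.lt_or_gt with hlt | hlt
  · obtain ⟨L, hL, hL0, hconv⟩ := exists_tendsto_iterate_of_apply_lt hmono hmaps hcont ht₀ hlt
    refine ⟨q + L, false, ?_⟩
    rintro w (rfl | hw)
    · exact hlim (hconv t₀ ⟨hL, le_rfl⟩)
    · obtain ⟨s, hs, rfl⟩ := openArc_subset_image_Ioo q hL.le (by linarith [ht₀.2]) hw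
      exact hlim (hconv s ⟨hs.1, hs.2.le⟩)
  · obtain ⟨L, hL, hL1, hconv⟩ := exists_tendsto_iterate_of_lt_apply hmono hmaps hcont ht₀ hlt
    refine ⟨q + L, true, ?_⟩
    rintro w (rfl | hw)
    · exact hlim (hconv t₀ ⟨le_rfl, hL⟩)
    · obtain ⟨s, hs, rfl⟩ := openArc_subset_image_Ioo q hL.le (by linarith [ht₀.1]) hw
      exact hlim (hconv s ⟨hs.1.le, hs.2⟩)

theorem exists_isFixedPt_of_mapsTo {h : S1 → S1} {D : Set S1} (hD : IsCompact D)
    (hDc : IsPreconnected D) (hDne : D.Nonempty) (hh : ContinuousOn h D) (hmaps : MapsTo h D D)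
    {c : S1} (hc : c ∉ D) : ∃ y ∈ D, IsFixedPt h y := by
  have hcoord : ContinuousOn (fun w => argS1 (w - c)) D := fun w hw =>
    ((continuousAt_argS1 (sub_ne_zero.2 (ne_of_mem_of_not_mem hw hc))).comp
      (f := fun w => w - c) (continuous_sub_right c).continuousAt).continuousWithinAt
  set J := (fun w => argS1 (w - c)) '' D
  have hJc : IsCompact J := hD.image_of_continuousOn hcoord
  have hJ : J = Icc (sInf J) (sSup J) :=
    eq_Icc_of_connected_compact ⟨hDne.image _, hDc.image _ hcoord⟩ hJc
  have hback : MapsTo (fun t : ℝ => c + (t : S1)) J D := by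
    rintro _ ⟨w, hw, rfl⟩
    simpa using hw
  have hmapsJ : MapsTo (chartMap h c) J J := fun t ht => ⟨_, hmaps (hback ht), rfl⟩
  have hcontJ : ContinuousOn (chartMap h c) J :=
    hcoord.comp (hh.comp (continuous_add_coe _).continuousOn hback)
      (hmaps.comp hback)
  rw [hJ] at hmapsJ hcontJ
  obtain ⟨t, ht, hfix⟩ := exists_mem_Icc_isFixedPt_of_mapsTo hcontJ
    (csInf_le_csSup (hDne.image _) hJc.bddBelow hJc.bddAbove) hmapsJ
  refine ⟨c + t, hback (hJ ▸ ht), ?_⟩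
  rw [IsFixedPt, ← add_coe_chartMap h c t, hfix.eq]

theorem exists_dist_iterate_lt {X : Type*} [PseudoMetricSpace X] {f : X → X} {B : Set X}
    (hB : IsCompact B) (hf : MapsTo f B B) (hne : B.Nonempty) {ε : ℝ} (hε : 0 < ε) :
    ∃ p ∈ B, ∃ N, 0 < N ∧ dist (f^[N] p) p < ε := by
  obtain ⟨b, hb⟩ := hne
  obtain ⟨z, -, ψ, hψ, hz⟩ := hB.tendsto_subseq fun n => hf.iterate n hb
  obtain ⟨k, hk⟩ := Metric.cauchySeq_iff'.1 hz.cauchySeq ε hε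
  refine ⟨f^[ψ k] b, hf.iterate _ hb, ψ (k + 1) - ψ k, Nat.sub_pos_of_lt (hψ k.lt_succ_self), ?_⟩
  rw [← iterate_add_apply, Nat.sub_add_cancel (hψ k.lt_succ_self).le]
  exact hk (k + 1) k.le_succ

end CircleDynamics

section PeriodicPoints

theorem exists_isPeriodicPt (g : HomS1) {A B : Set S1} (hA : IsClosed A) (hB : IsClosed B)
    (hAB : Disjoint A B) (hgA : MapsTo g A A) (hgB : MapsTo g B B) (hAne : A.Nonempty)
    (hBne : B.Nonempty) : ∃ N, 0 < N ∧ ∃ q, IsPeriodicPt g N q := by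
  rcases hAne.exists_eq_singleton_or_nontrivial with ⟨a, rfl⟩ | ⟨a₁, ha₁, a₂, ha₂, ha⟩
  · exact ⟨1, one_pos, a, by simpa [IsPeriodicPt, IsFixedPt] using hgA rfl⟩
  obtain ⟨δ, hδ, hthick⟩ := hB.isCompact.exists_thickening_subset_open hA.isOpen_compl
    hAB.symm.subset_compl_right
  obtain ⟨p, hp, N, hN, hdist⟩ := exists_dist_iterate_lt hB.isCompact hgB hBne hδ
  -- `g^[N]` moves `p` by less than `δ`, so `p` and `g^[N] p` lie in one component of `Aᶜ`
  set γ := connectedComponentIn Aᶜ p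
  have hpγ : p ∈ γ := mem_connectedComponentIn (disjoint_right.1 hAB hp)
  have hpNγ : g^[N] p ∈ γ := by
    obtain ⟨r, hr, hrnorm⟩ := exists_coe_eq_abs_eq_norm (g^[N] p - p)
    have hseg : IsPreconnected ((fun s : ℝ => p + ((s * r : ℝ) : S1)) '' Icc 0 1) :=
      isPreconnected_Icc.image _ ((continuous_add_coe p).comp (continuous_mul_const r)).continuousOn
    refine hseg.subset_connectedComponentIn ⟨0, by simp⟩ ?_ ⟨1, by simp [hr]⟩
    rintro _ ⟨s, hs, rfl⟩
    refine hthick (mem_thickening_iff.2 ⟨p, hp, ?_⟩)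
    rw [dist_eq_norm, add_sub_cancel_left]
    calc ‖((s * r : ℝ) : S1)‖ ≤ |s * r| := norm_coe_le_abs _
      _ ≤ |r| := by
        rw [abs_mul, abs_of_nonneg hs.1]
        exact mul_le_of_le_one_left (abs_nonneg r) hs.2
      _ < δ := by rwa [hrnorm, ← dist_eq_norm]
  set h := (⇑g.symm)^[N]
  have hleft : LeftInverse h g^[N] := LeftInverse.iterate g.symm_apply_apply N
  have hright : RightInverse h g^[N] := RightInverse.iterate g.apply_symm_apply N
  have hh : Continuous h := g.symm.continuous.iterate N
  have hγ : MapsTo h γ γ := by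
    refine (mapsTo_image h γ).mono_right ((isPreconnected_connectedComponentIn.image _
      hh.continuousOn).subset_connectedComponentIn ⟨_, hpNγ, hleft p⟩ ?_)
    rintro _ ⟨w, hw, rfl⟩ hwA
    exact connectedComponentIn_subset _ _ hw (hright w ▸ hgA.iterate N hwA)
  obtain ⟨c, hc⟩ := exists_notMem_closure_of_isPreconnected isPreconnected_connectedComponentIn
    (fun hmem => (connectedComponentIn_subset _ _ hmem : a₁ ∈ Aᶜ) ha₁)
    (fun hmem => (connectedComponentIn_subset _ _ hmem : a₂ ∈ Aᶜ) ha₂) ha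
  obtain ⟨y, -, hy⟩ := exists_isFixedPt_of_mapsTo isClosed_closure.isCompact
    isPreconnected_connectedComponentIn.closure ⟨p, subset_closure hpγ⟩ hh.continuousOn
    (hγ.closure hh) hc
  have hfix := hright y
  rw [hy.eq] at hfix
  exact ⟨N, hN, y, hfix⟩

end PeriodicPoints

section Trapping

theorem Set.MapsTo.iterate_mem_of_apply_mem {X : Type*} {g : X → X} {K : Set X}
    (hg : MapsTo g K K) {x : X} (hx : g x ∈ K) {n : ℕ} (hn : 0 < n) : g^[n] x ∈ K := by
  obtain ⟨m, rfl⟩ := Nat.exists_eq_add_of_lt hn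
  rw [zero_add, iterate_succ_apply]
  exact hg.iterate m hx

theorem exists_sideArc_disjoint (g : HomS1) {K K' : Set S1} (hK : IsClosed K) (hK' : IsClosed K')
    (hKK' : Disjoint K K') (hgK : MapsTo g K K) (hgK' : MapsTo g K' K') (hK'ne : K'.Nonempty)
    {x : S1} (hx : x ∉ K) (hgx : g x ∈ K) :
    ∃ ℓ ∈ K, ∃ b, ∀ C, IsClosed C → MapsTo g C C → Disjoint C K → Disjoint C (sideArc b x ℓ) := by
  obtain ⟨N, hN, q, hq⟩ := exists_isPeriodicPt g hK hK' hKK' hgK hgK' ⟨_, hgx⟩ hK'ne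
  -- if the chart of `g^[N]` at `q` reverses the order, the chart of `g^[N + N]` preserves it
  obtain ⟨M, hM, hqM, hmono⟩ :
      ∃ M, 0 < M ∧ g^[M] q = q ∧ MonotoneOn (chartMap g^[M] q) (Ioo 0 1) := by
    have hinj := g.injective.iterate N
    rcases (continuousOn_chartMap (g.continuous.iterate N) hinj hq).strictMonoOn_of_injOn_Ioo
      zero_lt_one (injOn_chartMap hinj) with hmono | hanti
    · exact ⟨N, hN, hq, hmono.monotoneOn⟩
    · refine ⟨N + N, by omega, by rw [iterate_add_apply, hq.eq, hq.eq], ?_⟩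
      rw [iterate_add, chartMap_comp]
      exact (hanti.comp hanti (mapsTo_chartMap hinj hq)).monotoneOn
  set ν := g^[M]
  have hνK : ∀ {n}, 0 < n → ν^[n] x ∈ K := fun hn => by
    rw [← iterate_mul]
    exact hgK.iterate_mem_of_apply_mem hgx (Nat.mul_pos hM hn)
  have hxq : x - q ≠ 0 := fun h => by
    obtain rfl := sub_eq_zero.1 h
    exact hx (by simpa [hqM] using hνK (n := 1) one_pos)
  set t₀ := argS1 (x - q)
  have hxt : q + (t₀ : S1) = x := by simp [t₀]
  have hne : chartMap ν q t₀ ≠ t₀ := fun h => hx <| by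
    have hfix : ν x = x := by
      rw [← hxt, ← add_coe_chartMap ν q t₀, h]
    simpa [hfix] using hνK (n := 1) one_pos
  have hinj := g.injective.iterate M
  obtain ⟨ℓ, b, hattr⟩ := exists_attracting_sideArc (semiconj_chartMap ν q) hmono
    (mapsTo_chartMap hinj hqM) (continuousOn_chartMap (g.continuous.iterate M) hinj hqM)
    ⟨argS1_pos_iff.2 hxq, (argS1_mem_Ico _).2⟩ hne
  rw [hxt] at hattr
  have hℓ : ℓ ∈ K := hK.mem_of_tendsto (hattr x (mem_insert _ _))
    (eventually_atTop.2 ⟨1, fun _ hn => hνK hn⟩)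
  refine ⟨ℓ, hℓ, b, fun C hC hgC hCK => disjoint_left.2 fun w hwC hw => disjoint_left.1 hCK ?_ hℓ⟩
  exact hC.mem_of_tendsto (hattr w (mem_insert_of_mem _ hw))
    (Eventually.of_forall fun n => (hgC.iterate M).iterate n hwC)

end Trapping

section MinimalSets

variable {F : Set HomS1}

theorem InvariantUnder.mapsTo_of_mem_semigroupOf {K : Set S1} (hK : InvariantUnder F K)
    {g : HomS1} (hg : g ∈ semigroupOf F) : MapsTo g K K := by
  induction hg with
  | base f hf => exact mapsTo_iff_image_subset.2 (hK f hf)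
  | comp f g _ _ hf hg => exact hf.comp hg

theorem disjoint_of_mem_minimalSets {K K' : Set S1} (hK : K ∈ minimalSets F)
    (hK' : K' ∈ minimalSets F) (hne : K ≠ K') : Disjoint K K' := by
  rw [disjoint_iff_inter_eq_empty, ← not_nonempty_iff_eq_empty]
  intro hKK'
  have hinv : InvariantUnder F (K ∩ K') := fun f hf =>
    (image_inter_subset _ _ _).trans (inter_subset_inter (hK.2.2.1 f hf) (hK'.2.2.1 f hf))
  have hcl := hK.2.1.inter hK'.2.1
  exact hne ((hK.2.2.2 _ inter_subset_left hKK' hcl hinv).symm.trans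
    (hK'.2.2.2 _ inter_subset_right hKK' hcl hinv))

theorem minimalSets_nonempty (F : Set HomS1) : (minimalSets F).Nonempty := by
  set S : Set (Set S1) := {K | K.Nonempty ∧ IsClosed K ∧ InvariantUnder F K}
  have hchain : ∀ c ⊆ S, IsChain (· ⊆ ·) c → c.Nonempty → ∃ lb ∈ S, ∀ s ∈ c, lb ⊆ s := by
    intro c hcS hc hcne
    refine ⟨⋂₀ c, ⟨?_, isClosed_sInter fun s hs => (hcS hs).2.1, ?_⟩,
      fun s hs => sInter_subset_of_mem hs⟩
    · have : Nonempty c := hcne.coe_sort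
      refine IsCompact.nonempty_sInter_of_directed_nonempty_isCompact_isClosed
        (fun a ha b hb => ?_) (fun s hs => (hcS hs).1) (fun s hs => (hcS hs).2.1.isCompact)
        (fun s hs => (hcS hs).2.1)
      rcases hc.total ha hb with hab | hba
      · exact ⟨a, ha, subset_rfl, hab⟩
      · exact ⟨b, hb, hba, subset_rfl⟩
    · rintro f hf _ ⟨w, hw, rfl⟩ s hs
      exact (hcS hs).2.2 f hf ⟨w, hw s hs, rfl⟩
  obtain ⟨m, -, hm⟩ := zorn_superset_nonempty S hchain univ
    ⟨univ_nonempty, isClosed_univ, fun _ _ => subset_univ _⟩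
  exact ⟨m, hm.prop.1, hm.prop.2.1, hm.prop.2.2, fun K' hK' hne hcl hinv =>
    subset_antisymm hK' (hm.le_of_le ⟨hne, hcl, hinv⟩ hK')⟩

theorem exists_sideArc_disjoint_minimalSets {x : S1} {K K' : Set S1} (hK : K ∈ minimalSets F)
    (hK' : K' ∈ minimalSets F) (hne : K ≠ K') (hxK : (orbitOf F x ∩ K).Nonempty)
    (hxK' : (orbitOf F x ∩ K').Nonempty) :
    ∃ ℓ ∈ K, ℓ ≠ x ∧ ∃ b, ∀ K'' ∈ minimalSets F, K'' ≠ K → Disjoint K'' (sideArc b x ℓ) := by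
  obtain ⟨_, ⟨g, hg, rfl⟩, hgx⟩ := hxK
  obtain ⟨_, ⟨g', hg', rfl⟩, hg'x⟩ := hxK'
  have hx : x ∉ K := fun hx =>
    disjoint_left.1 (disjoint_of_mem_minimalSets hK hK' hne)
      (hK.2.2.1.mapsTo_of_mem_semigroupOf hg' hx) hg'x
  obtain ⟨ℓ, hℓ, b, htrap⟩ := exists_sideArc_disjoint g hK.2.1 hK'.2.1
    (disjoint_of_mem_minimalSets hK hK' hne) (hK.2.2.1.mapsTo_of_mem_semigroupOf hg)
    (hK'.2.2.1.mapsTo_of_mem_semigroupOf hg) hK'.1 hx hgx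
  exact ⟨ℓ, hℓ, ne_of_mem_of_not_mem hℓ hx, b, fun K'' hK'' hne'' =>
    htrap K'' hK''.2.1 (hK''.2.2.1.mapsTo_of_mem_semigroupOf hg)
      (disjoint_of_mem_minimalSets hK'' hK hne'')⟩

theorem not_three_minimalSets_meet_orbit {x : S1} {K₁ K₂ K₃ : Set S1}
    (h₁ : K₁ ∈ minimalSets F) (h₂ : K₂ ∈ minimalSets F) (h₃ : K₃ ∈ minimalSets F)
    (h₁₂ : K₁ ≠ K₂) (h₁₃ : K₁ ≠ K₃) (h₂₃ : K₂ ≠ K₃) (hx₁ : (orbitOf F x ∩ K₁).Nonempty)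
    (hx₂ : (orbitOf F x ∩ K₂).Nonempty) (hx₃ : (orbitOf F x ∩ K₃).Nonempty) : False := by
  obtain ⟨ℓ₁, hℓ₁, hℓ₁x, b₁, ht₁⟩ := exists_sideArc_disjoint_minimalSets h₁ h₂ h₁₂ hx₁ hx₂
  obtain ⟨ℓ₂, hℓ₂, hℓ₂x, b₂, ht₂⟩ := exists_sideArc_disjoint_minimalSets h₂ h₁ h₁₂.symm hx₂ hx₁
  obtain ⟨ℓ₃, hℓ₃, hℓ₃x, b₃, ht₃⟩ := exists_sideArc_disjoint_minimalSets h₃ h₁ h₁₃.symm hx₃ hx₁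
  -- two of the three arcs leave `x` on the same side, and then one contains the other's endpoint
  have clash : ∀ {K K' ℓ ℓ' b}, Disjoint K K' → ℓ ∈ K → ℓ' ∈ K' → ℓ ≠ x → ℓ' ≠ x →
      Disjoint K (sideArc b x ℓ') → Disjoint K' (sideArc b x ℓ) → False := by
    intro K K' ℓ ℓ' b hKK' hℓ hℓ' hℓx hℓ'x ht ht'
    rcases mem_sideArc_or_mem_sideArc b hℓx hℓ'x
      (ne_of_mem_of_not_mem hℓ (disjoint_left.1 hKK' · hℓ')) with h | h
    · exact disjoint_left.1 ht hℓ h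
    · exact disjoint_left.1 ht' hℓ' h
  obtain rfl | rfl | rfl : b₁ = b₂ ∨ b₁ = b₃ ∨ b₂ = b₃ := by
    cases b₁ <;> cases b₂ <;> cases b₃ <;> simp
  · exact clash (disjoint_of_mem_minimalSets h₁ h₂ h₁₂) hℓ₁ hℓ₂ hℓ₁x hℓ₂x
      (ht₂ K₁ h₁ h₁₂) (ht₁ K₂ h₂ h₁₂.symm)
  · exact clash (disjoint_of_mem_minimalSets h₁ h₃ h₁₃) hℓ₁ hℓ₃ hℓ₁x hℓ₃x
      (ht₃ K₁ h₁ h₁₃) (ht₁ K₃ h₃ h₁₃.symm)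
  · exact clash (disjoint_of_mem_minimalSets h₂ h₃ h₂₃) hℓ₂ hℓ₃ hℓ₂x hℓ₃x
      (ht₃ K₂ h₂ h₂₃) (ht₂ K₃ h₃ h₂₃.symm)

end MinimalSets

theorem statement4_general (F : Set HomS1) :
    ∀ x : S1, ∃ K₁ ∈ minimalSets F, ∃ K₂ ∈ minimalSets F,
      ∀ K ∈ minimalSets F, K ≠ K₁ → K ≠ K₂ → orbitOf F x ∩ K = ∅ := by
  intro x
  by_contra! h
  obtain ⟨K₀, hK₀⟩ := minimalSets_nonempty F
  obtain ⟨K₁, h₁, -, -, hx₁⟩ := h K₀ hK₀ K₀ hK₀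
  obtain ⟨K₂, h₂, h₂₁, -, hx₂⟩ := h K₁ h₁ K₁ h₁
  obtain ⟨K₃, h₃, h₃₁, h₃₂, hx₃⟩ := h K₁ h₁ K₂ h₂
  exact not_three_minimalSets_meet_orbit h₁ h₂ h₃ h₂₁.symm h₃₁.symm h₃₂.symm hx₁ hx₂ hx₃

/-- **Proposition 3.1.** If the collection of `F`-invariant minimal sets is finite, then
for every `x` there are minimal sets `K₁, K₂` such that the orbit of `x` under the
generated semigroup does not intersect any other minimal set. -/
theorem statement4 (F : Set HomS1) (hfin : (minimalSets F).Finite) :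
    ∀ x : S1, ∃ K₁ ∈ minimalSets F, ∃ K₂ ∈ minimalSets F,
      ∀ K ∈ minimalSets F, K ≠ K₁ → K ≠ K₂ → orbitOf F x ∩ K = ∅ :=
  statement4_general F

end
end

section
/- Assume F ⊆ Hom(S¹) and that the collection K_F of F-invariant minimal sets is finite with at least two elements. Fix K ∈ K_F, enumerate E_K = {I_{K,1},…,I_{K,ℓ_K}} in counterclockwise order. Then for every j ∈ {1,…,ℓ_K} and every f ∈ F there exist k_j, r_j ∈ {1,…,ℓ_K} such that f(I_{K,j}) ⊆ I_{K,k_j} and f(I_{K,r_j}) ⊆ I_{K,j}. -/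
open MeasureTheory Set Function Filter Topology
open scoped ENNReal NNReal

noncomputable section

/-!
Let `L` be the union of the other minimal sets and `U` the union of the components of `S¹ \ K`
(the gaps of `K`) that meet `L`. The arcs of `E_K` are exactly the connected components of
`S¹ \ U`. By compactness of `L` only finitely many gaps meet `L`; the image under `f` of such a gap
contains the gap of `f l` for each of its points `l ∈ L`, and two gaps cannot swallow the same gap,
so `f` induces a bijection of these gaps and `U ⊆ f U`. Hence `f` maps `S¹ \ U` into itself, and so
maps every component of it into another one. For the second claim it suffices that `f (S¹ \ U)`
meets every component `I`. Otherwise `I` lies in `f γ` for a single gap `γ`, and `f γ` contains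
only one gap meeting `L`, which lies on one side of `I`; then `I` can be enlarged inside `f γ` on
the other side without meeting `U`, contradicting that `I` is a component.
-/

section Gaps

variable {X : Type*} [TopologicalSpace X] {K L : Set X}

lemma IsPreconnected.subset_of_disjoint_frontier {s t : Set X} (hs : IsPreconnected s)
    (hst : (s ∩ t).Nonempty) (hfr : Disjoint s (frontier t)) : s ⊆ t := by
  have hsub : s ⊆ interior t ∪ (closure t)ᶜ := fun x hx => by
    by_cases h : x ∈ closure t
    · exact Or.inl (by_contra fun h' => disjoint_left.mp hfr hx ⟨h, h'⟩)
    · exact Or.inr h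
  obtain ⟨x, hxs, hxt⟩ := hst
  refine (hs.subset_left_of_subset_union isOpen_interior isClosed_closure.isOpen_compl
    (disjoint_compl_right.mono_left (interior_subset.trans subset_closure)) hsub
    ⟨x, hxs, (hsub hxs).resolve_right (not_not.mpr (subset_closure hxt))⟩).trans
    interior_subset

lemma connectedComponentIn_eq_of_mem {F : Set X} {x₁ x₂ y : X}
    (h₁ : y ∈ connectedComponentIn F x₁) (h₂ : y ∈ connectedComponentIn F x₂) :
    connectedComponentIn F x₁ = connectedComponentIn F x₂ :=
  (connectedComponentIn_eq h₁).trans (connectedComponentIn_eq h₂).symm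

lemma isClosed_connectedComponentIn {F : Set X}
    (hF : IsClosed F) (x : X) : IsClosed (connectedComponentIn F x) := by
  by_cases hx : x ∈ F
  · exact closure_subset_iff_isClosed.mp (isPreconnected_connectedComponentIn.closure
      |>.subset_connectedComponentIn (subset_closure (mem_connectedComponentIn hx))
      (closure_minimal (connectedComponentIn_subset _ _) hF))
  · rw [← connectedComponentIn_nonempty_iff, not_nonempty_iff_eq_empty] at hx
    rw [hx]; exact isClosed_empty

def gapUnion (K L : Set X) : Set X := ⋃ l ∈ L, connectedComponentIn Kᶜ l

lemma subset_gapUnion (hKL : Disjoint K L) : L ⊆ gapUnion K L := fun _ hl =>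
  mem_biUnion hl (mem_connectedComponentIn (disjoint_right.mp hKL hl))

lemma disjoint_gapUnion : Disjoint K (gapUnion K L) := by
  refine disjoint_right.mpr fun x hx => ?_
  obtain ⟨l, -, hx⟩ := mem_iUnion₂.mp hx
  exact connectedComponentIn_subset _ _ hx

lemma connectedComponentIn_compl_subset_image (f : X ≃ₜ X) (hfK : f '' K ⊆ K) {x : X}
    (hx : x ∉ K) : connectedComponentIn Kᶜ (f x) ⊆ f '' connectedComponentIn Kᶜ x := by
  rw [f.image_connectedComponentIn hx, f.image_compl]
  exact connectedComponentIn_mono _ (compl_subset_compl.mpr hfK)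

lemma connectedComponentIn_subset_gapUnion {w y : X} (hy : y ∈ connectedComponentIn Kᶜ w)
    (hyU : y ∈ gapUnion K L) : connectedComponentIn Kᶜ w ⊆ gapUnion K L := by
  obtain ⟨l, hl, hyl⟩ := mem_iUnion₂.mp hyU
  rw [connectedComponentIn_eq_of_mem hy hyl]
  exact subset_biUnion_of_mem (u := fun l => connectedComponentIn Kᶜ l) hl

lemma disjoint_gapUnion_of_frontier_subset {J : Set X} (hJ : frontier J ⊆ K)
    (hJL : Disjoint J L) : Disjoint J (gapUnion K L) := by
  refine disjoint_right.mpr fun x hx hxJ => ?_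
  obtain ⟨l, hl, hxl⟩ := mem_iUnion₂.mp hx
  have hlJ := isPreconnected_connectedComponentIn.subset_of_disjoint_frontier ⟨x, hxl, hxJ⟩
    (disjoint_compl_left.mono (connectedComponentIn_subset _ _) hJ)
    (mem_connectedComponentIn (connectedComponentIn_nonempty_iff.mp ⟨x, hxl⟩))
  exact disjoint_left.mp hJL hlJ hl

variable [LocallyConnectedSpace X]

lemma isOpen_gapUnion (hK : IsClosed K) : IsOpen (gapUnion K L) :=
  isOpen_biUnion fun _ _ => hK.isOpen_compl.connectedComponentIn

lemma finite_image_connectedComponentIn (hK : IsClosed K)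
    (hL : IsCompact L) (hKL : Disjoint K L) : (connectedComponentIn Kᶜ '' L).Finite := by
  obtain ⟨t, htL, htfin, hcover⟩ := hL.elim_finite_subcover_image
    (fun l _ => hK.isOpen_compl.connectedComponentIn) (subset_gapUnion hKL)
  refine (htfin.image (connectedComponentIn Kᶜ)).subset ?_
  rintro - ⟨l, hl, rfl⟩
  obtain ⟨i, hi, hli⟩ := mem_iUnion₂.mp (hcover hl)
  exact ⟨i, hi, connectedComponentIn_eq hli⟩

lemma exists_bijOn_image_subset (f : X ≃ₜ X) (hK : IsClosed K) (hL : IsCompact L)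
    (hKL : Disjoint K L) (hfK : f '' K ⊆ K) (hfL : f '' L ⊆ L) :
    ∃ ν : Set X → Set X, BijOn ν (connectedComponentIn Kᶜ '' L) (connectedComponentIn Kᶜ '' L) ∧
      ∀ γ ∈ connectedComponentIn Kᶜ '' L, ν γ ⊆ f '' γ := by
  have hswallow : ∀ γ ∈ connectedComponentIn Kᶜ '' L,
      ∃ γ' ∈ connectedComponentIn Kᶜ '' L, γ' ⊆ f '' γ := by
    rintro - ⟨l, hl, rfl⟩
    exact ⟨_, mem_image_of_mem _ (hfL (mem_image_of_mem f hl)),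
      connectedComponentIn_compl_subset_image f hfK (disjoint_right.mp hKL hl)⟩
  choose! ν hνG hν using hswallow
  refine ⟨ν, ((finite_image_connectedComponentIn hK hL hKL).injOn_iff_bijOn_of_mapsTo hνG).mp ?_,
    hν⟩
  rintro - ⟨l₁, hl₁, rfl⟩ - ⟨l₂, hl₂, rfl⟩ h
  obtain ⟨m, hm, hmν⟩ := hνG _ ⟨l₁, hl₁, rfl⟩
  have hmK : m ∉ K := disjoint_right.mp hKL hm
  obtain ⟨y₁, hy₁, hfy₁⟩ := hν _ ⟨l₁, hl₁, rfl⟩ (hmν ▸ mem_connectedComponentIn hmK)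
  obtain ⟨y₂, hy₂, hfy₂⟩ := hν _ ⟨l₂, hl₂, rfl⟩ (h ▸ hmν ▸ mem_connectedComponentIn hmK)
  exact connectedComponentIn_eq_of_mem hy₁ (f.injective (hfy₁.trans hfy₂.symm) ▸ hy₂)

lemma gapUnion_subset_image (f : X ≃ₜ X) (hK : IsClosed K) (hL : IsCompact L)
    (hKL : Disjoint K L) (hfK : f '' K ⊆ K) (hfL : f '' L ⊆ L) :
    gapUnion K L ⊆ f '' gapUnion K L := by
  obtain ⟨ν, hbij, hν⟩ := exists_bijOn_image_subset f hK hL hKL hfK hfL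
  intro x hx
  obtain ⟨l', hl', hx⟩ := mem_iUnion₂.mp hx
  obtain ⟨-, ⟨l, hl, rfl⟩, hνl⟩ := hbij.surjOn ⟨l', hl', rfl⟩
  obtain ⟨y, hy, rfl⟩ := hν _ ⟨l, hl, rfl⟩ (hνl ▸ hx)
  exact mem_image_of_mem f (mem_biUnion hl hy)

lemma image_compl_gapUnion_subset (f : X ≃ₜ X) (hK : IsClosed K) (hL : IsCompact L)
    (hKL : Disjoint K L) (hfK : f '' K ⊆ K) (hfL : f '' L ⊆ L) :
    f '' (gapUnion K L)ᶜ ⊆ (gapUnion K L)ᶜ := by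
  rintro - ⟨y, hy, rfl⟩ hfy
  obtain ⟨u, hu, hfu⟩ := gapUnion_subset_image f hK hL hKL hfK hfL hfy
  exact hy (f.injective hfu ▸ hu)

lemma image_connectedComponentIn_compl_gapUnion_subset (f : X ≃ₜ X) (hK : IsClosed K)
    (hL : IsCompact L) (hKL : Disjoint K L) (hfK : f '' K ⊆ K) (hfL : f '' L ⊆ L) {c : X}
    (hc : c ∈ (gapUnion K L)ᶜ) :
    f '' connectedComponentIn (gapUnion K L)ᶜ c ⊆ connectedComponentIn (gapUnion K L)ᶜ (f c) :=
  (f.continuous.continuousOn.image_connectedComponentIn_subset hc).trans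
    (connectedComponentIn_mono _ (image_compl_gapUnion_subset f hK hL hKL hfK hfL))

lemma image_connectedComponentIn_inter_gapUnion_subset (f : X ≃ₜ X) (hK : IsClosed K)
    (hL : IsCompact L) (hKL : Disjoint K L) (hfK : f '' K ⊆ K) (hfL : f '' L ⊆ L) {l : X}
    (hl : l ∈ L) :
    f '' connectedComponentIn Kᶜ l ∩ gapUnion K L ⊆ connectedComponentIn Kᶜ (f l) := by
  obtain ⟨ν, hbij, hν⟩ := exists_bijOn_image_subset f hK hL hKL hfK hfL
  have hunique : ∀ l' ∈ L,
      (connectedComponentIn Kᶜ l' ∩ f '' connectedComponentIn Kᶜ l).Nonempty →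
        connectedComponentIn Kᶜ l' = ν (connectedComponentIn Kᶜ l) := by
    rintro l' hl' ⟨x, hx', hx⟩
    obtain ⟨-, ⟨m, hm, rfl⟩, hνm⟩ := hbij.surjOn ⟨l', hl', rfl⟩
    obtain ⟨y, hy, rfl⟩ := hν _ ⟨m, hm, rfl⟩ (hνm ▸ hx')
    obtain ⟨y', hy', hyy'⟩ := hx
    rw [← hνm, connectedComponentIn_eq_of_mem hy (f.injective hyy' ▸ hy')]
  rintro x ⟨hxl, hx⟩
  obtain ⟨l', hl', hx⟩ := mem_iUnion₂.mp hx
  have hfl : f l ∈ L := hfL (mem_image_of_mem f hl)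
  have hflK : f l ∉ K := disjoint_right.mp hKL hfl
  rwa [hunique (f l) hfl ⟨f l, mem_connectedComponentIn hflK,
    mem_image_of_mem f (mem_connectedComponentIn (disjoint_right.mp hKL hl))⟩,
    ← hunique l' hl' ⟨x, hx, hxl⟩]

/-- A point of `(gapUnion K L)ᶜ` outside `K` lies in a gap of `K` missing `L`, and this open
gap stays inside the component of `(gapUnion K L)ᶜ`. -/
lemma frontier_connectedComponentIn_compl_gapUnion_subset
    (hK : IsClosed K) (c : X) : frontier (connectedComponentIn (gapUnion K L)ᶜ c) ⊆ K := by
  intro w hw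
  by_contra hwK
  have hgap : IsOpen (connectedComponentIn Kᶜ w) := hK.isOpen_compl.connectedComponentIn
  obtain ⟨q, hqw, hqQ⟩ := mem_closure_iff.mp (frontier_subset_closure hw) _ hgap
    (mem_connectedComponentIn hwK)
  have hgapC : connectedComponentIn Kᶜ w ⊆ (gapUnion K L)ᶜ := fun y hy hyU =>
    connectedComponentIn_subset _ c hqQ (connectedComponentIn_subset_gapUnion hy hyU hqw)
  have hgapQ : connectedComponentIn Kᶜ w ⊆ connectedComponentIn (gapUnion K L)ᶜ c := by
    rw [connectedComponentIn_eq hqQ]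
    exact isPreconnected_connectedComponentIn.subset_connectedComponentIn hqw hgapC
  exact hw.2 (interior_maximal hgapQ hgap (mem_connectedComponentIn hwK))

end Gaps

namespace CircleArc

lemma argS1_mem_Ico (x : S1) : argS1 x ∈ Ico (0 : ℝ) 1 := by
  simpa [argS1] using (AddCircle.equivIco 1 0 x).2

lemma coe_argS1 (x : S1) : ((argS1 x : ℝ) : S1) = x := AddCircle.coe_equivIco

lemma argS1_coe (t : ℝ) : argS1 (t : S1) = Int.fract t := by
  have hfract : ((Int.fract t : ℝ) : S1) = t := by
    rw [Int.fract, AddCircle.coe_sub, sub_eq_self]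
    exact (AddCircle.coe_eq_zero_iff 1).mpr ⟨⌊t⌋, by simp⟩
  exact (AddCircle.coe_eq_coe_iff_of_mem_Ico (a := 0) (by simpa using argS1_mem_Ico _)
    (by rw [zero_add]; exact ⟨Int.fract_nonneg t, Int.fract_lt_one t⟩)).mp
    ((coe_argS1 _).trans hfract.symm)

lemma argS1_eq_zero_iff {x : S1} : argS1 x = 0 ↔ x = 0 := by
  refine ⟨fun h => ?_, fun h => by rw [h, ← AddCircle.coe_zero, argS1_coe, Int.fract_zero]⟩
  rw [← coe_argS1 x, h, AddCircle.coe_zero]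

lemma argS1_injective : Function.Injective argS1 := fun x y h => by
  rw [← coe_argS1 x, h, coe_argS1]

lemma argS1_sub_eq_fract (x y z : S1) :
    argS1 (y - x) = Int.fract (argS1 (y - z) - argS1 (x - z)) := by
  rw [← argS1_coe, AddCircle.coe_sub, coe_argS1, coe_argS1, sub_sub_sub_cancel_right]

lemma fract_eq_add_one_of_mem_Ico {a : ℝ} (h : a ∈ Ico (-1 : ℝ) 0) : Int.fract a = a + 1 :=
  Int.fract_eq_iff.mpr ⟨by linarith [h.1], by linarith [h.2], -1, by push_cast; ring⟩

lemma continuousOn_argS1_sub (z : S1) : ContinuousOn (fun w => argS1 (w - z)) {z}ᶜ := by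
  intro w hw
  have hne : w - z ≠ ((0 : ℝ) : S1) := by
    rw [AddCircle.coe_zero]; exact sub_ne_zero.mpr hw
  exact (continuous_subtype_val.continuousAt.comp
    ((AddCircle.continuousAt_equivIco 1 0 hne).comp
      (f := fun w => w - z) (continuous_sub_right z).continuousAt)).continuousWithinAt

def param (z : S1) (t : ℝ) : S1 := z + (t : S1)

lemma continuous_param (z : S1) : Continuous (param z) :=
  continuous_const.add (AddCircle.continuous_mk' 1)

lemma param_argS1 (z w : S1) : param z (argS1 (w - z)) = w := by
  simp [param, coe_argS1]

lemma argS1_param {z : S1} {t : ℝ} (ht : t ∈ Ico (0 : ℝ) 1) : argS1 (param z t - z) = t := by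
  rw [param, add_sub_cancel_left, argS1_coe, Int.fract_eq_self.mpr ht]

lemma mem_closedArc_iff {x y w : S1} : w ∈ closedArc x y ↔ argS1 (w - x) ≤ argS1 (y - x) := by
  simp only [closedArc, openArc, mem_insert_iff]
  constructor
  · rintro (rfl | rfl | h)
    · rw [sub_self, argS1_eq_zero_iff.mpr rfl]; exact (argS1_mem_Ico _).1
    · exact le_rfl
    · exact h.2.le
  · intro h
    rcases (argS1_mem_Ico (w - x)).1.eq_or_lt with h0 | h0
    · exact Or.inl (sub_eq_zero.mp (argS1_eq_zero_iff.mp h0.symm))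
    rcases h.eq_or_lt with h1 | h1
    · exact Or.inr (Or.inl (sub_left_injective (argS1_injective h1)))
    · exact Or.inr (Or.inr ⟨h0, h1⟩)

lemma mem_closedArc_param_iff {z w : S1} {p q : ℝ} (hp : 0 < p) (hpq : p ≤ q) (hq : q < 1) :
    w ∈ closedArc (param z p) (param z q) ↔ argS1 (w - z) ∈ Icc p q := by
  have hp' : argS1 (param z p - z) = p := argS1_param ⟨hp.le, by linarith⟩
  have hq' : argS1 (param z q - z) = q := argS1_param ⟨by linarith, hq⟩
  obtain ⟨hw0, hw1⟩ := argS1_mem_Ico (w - z)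
  have hqp : Int.fract (q - p) = q - p := Int.fract_eq_self.mpr ⟨by linarith, by linarith⟩
  rw [mem_closedArc_iff, argS1_sub_eq_fract _ w z, argS1_sub_eq_fract _ (param z q) z, hp', hq',
    hqp]
  rcases le_or_gt p (argS1 (w - z)) with h | h
  · rw [Int.fract_eq_self.mpr ⟨by linarith, by linarith⟩]
    exact ⟨fun h' => ⟨h, by linarith⟩, fun h' => by linarith [h'.2]⟩
  · rw [fract_eq_add_one_of_mem_Ico ⟨by linarith, by linarith⟩]
    exact ⟨fun h' => by linarith, fun h' => by linarith [h'.1]⟩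

lemma mem_closedArc_iff_of_notMem {x y z : S1} (hz : z ∉ closedArc x y) :
    0 < argS1 (x - z) ∧ argS1 (x - z) ≤ argS1 (y - z) ∧
      ∀ w, w ∈ closedArc x y ↔ argS1 (w - z) ∈ Icc (argS1 (x - z)) (argS1 (y - z)) := by
  obtain ⟨hx0, hx1⟩ := argS1_mem_Ico (x - z)
  obtain ⟨hy0, hy1⟩ := argS1_mem_Ico (y - z)
  rw [mem_closedArc_iff, argS1_sub_eq_fract x z z, argS1_sub_eq_fract x y z, sub_self,
    argS1_eq_zero_iff.mpr rfl, zero_sub] at hz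
  have hxpos : 0 < argS1 (x - z) := by
    refine hx0.lt_of_ne fun h => hz ?_
    rw [← h, neg_zero, Int.fract_zero]; exact Int.fract_nonneg _
  have hxy : argS1 (x - z) ≤ argS1 (y - z) := by
    by_contra! h
    rw [fract_eq_add_one_of_mem_Ico ⟨by linarith, by linarith⟩,
      fract_eq_add_one_of_mem_Ico ⟨by linarith, by linarith⟩] at hz
    linarith
  refine ⟨hxpos, hxy, fun w => ?_⟩
  conv_lhs => rw [← param_argS1 z x, ← param_argS1 z y]
  exact mem_closedArc_param_iff hxpos hxy hy1

lemma closedArc_eq_image (x y : S1) : closedArc x y = param x '' Icc 0 (argS1 (y - x)) := by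
  ext w
  refine ⟨fun hw => ⟨argS1 (w - x), ⟨(argS1_mem_Ico _).1, mem_closedArc_iff.mp hw⟩,
    param_argS1 x w⟩, ?_⟩
  rintro ⟨t, ht, rfl⟩
  rw [mem_closedArc_iff, argS1_param ⟨ht.1, ht.2.trans_lt (argS1_mem_Ico _).2⟩]
  exact ht.2

lemma isClosed_closedArc (x y : S1) : IsClosed (closedArc x y) := by
  rw [closedArc_eq_image]
  exact (isCompact_Icc.image (continuous_param x)).isClosed

lemma isPreconnected_closedArc (x y : S1) : IsPreconnected (closedArc x y) := by
  rw [closedArc_eq_image]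
  exact isPreconnected_Icc.image _ (continuous_param x).continuousOn

lemma left_mem_closedArc (x y : S1) : x ∈ closedArc x y := mem_insert _ _

lemma right_mem_closedArc (x y : S1) : y ∈ closedArc x y := mem_insert_of_mem _ (mem_insert _ _)

lemma exists_notMem_closedArc (x y : S1) : ∃ z, z ∉ closedArc x y := by
  obtain ⟨h0, h1⟩ := argS1_mem_Ico (y - x)
  refine ⟨param x ((argS1 (y - x) + 1) / 2), fun h => ?_⟩
  rw [mem_closedArc_iff, argS1_param ⟨by linarith, by linarith⟩] at h
  linarith

lemma frontier_closedArc_subset (x y : S1) : frontier (closedArc x y) ⊆ {x, y} := by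
  obtain ⟨z, hz⟩ := exists_notMem_closedArc x y
  obtain ⟨-, -, hmem⟩ := mem_closedArc_iff_of_notMem hz
  have hopen : IsOpen ({z}ᶜ ∩ (fun w => argS1 (w - z)) ⁻¹' Ioo (argS1 (x - z)) (argS1 (y - z))) :=
    (continuousOn_argS1_sub z).isOpen_inter_preimage isOpen_compl_singleton isOpen_Ioo
  have hsub : {z}ᶜ ∩ (fun w => argS1 (w - z)) ⁻¹' Ioo (argS1 (x - z)) (argS1 (y - z)) ⊆
      closedArc x y := fun w hw => (hmem w).mpr (Ioo_subset_Icc_self hw.2)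
  intro w hw
  have hwI : w ∈ closedArc x y := (isClosed_closedArc x y).frontier_subset hw
  have hwz : w ≠ z := fun h => hz (h ▸ hwI)
  rcases ((hmem w).mp hwI).1.eq_or_lt with h1 | h1
  · left; rw [← param_argS1 z w, ← h1, param_argS1]
  rcases ((hmem w).mp hwI).2.eq_or_lt with h2 | h2
  · right; rw [mem_singleton_iff, ← param_argS1 z w, h2, param_argS1]
  · exact absurd (interior_maximal hsub hopen ⟨hwz, h1, h2⟩) hw.2

lemma mem_frontier_closedArc (x y : S1) :
    x ∈ frontier (closedArc x y) ∧ y ∈ frontier (closedArc x y) := by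
  obtain ⟨z, hz⟩ := exists_notMem_closedArc x y
  obtain ⟨hx0, hxy, hmem⟩ := mem_closedArc_iff_of_notMem hz
  have hy1 := (argS1_mem_Ico (y - z)).2
  have houtside : ∀ t ∈ Ioo (0 : ℝ) 1, t ∉ Icc (argS1 (x - z)) (argS1 (y - z)) →
      param z t ∈ (closedArc x y)ᶜ := fun t ht htI h =>
    htI (argS1_param (z := z) (Ioo_subset_Ico_self ht) ▸ (hmem _).mp h)
  have hclosure : ∀ s, s ⊆ Ioo (0 : ℝ) 1 \ Icc (argS1 (x - z)) (argS1 (y - z)) →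
      param z '' closure s ⊆ closure (closedArc x y)ᶜ := fun s hs =>
    (image_closure_subset_closure_image (continuous_param z)).trans
      (closure_mono (image_subset_iff.mpr fun t ht => houtside t (hs ht).1 (hs ht).2))
  rw [frontier_eq_closure_inter_closure, (isClosed_closedArc x y).closure_eq]
  refine ⟨⟨left_mem_closedArc x y, ?_⟩, ⟨(hmem y).mpr ⟨hxy, le_rfl⟩, ?_⟩⟩
  · have h := hclosure (Ioo 0 (argS1 (x - z))) (fun t ht => ⟨⟨ht.1, by linarith [ht.2]⟩,
      fun h => by linarith [h.1, ht.2]⟩)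
      ⟨argS1 (x - z), by rw [closure_Ioo hx0.ne]; exact right_mem_Icc.mpr hx0.le, rfl⟩
    rwa [param_argS1] at h
  · have h := hclosure (Ioo (argS1 (y - z)) 1) (fun t ht => ⟨⟨by linarith [ht.1], ht.2⟩,
      fun h => by linarith [h.2, ht.1]⟩)
      ⟨argS1 (y - z), by rw [closure_Ioo hy1.ne]; exact left_mem_Icc.mpr hy1.le, rfl⟩
    rwa [param_argS1] at h

lemma exists_eq_closedArc {Q : Set S1} {z : S1} (hQ : IsClosed Q) (hQc : IsPreconnected Q)
    (hQne : Q.Nonempty) (hz : z ∉ Q) : ∃ a b, Q = closedArc a b := by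
  have hcont : ContinuousOn (fun w => argS1 (w - z)) Q :=
    (continuousOn_argS1_sub z).mono fun w hw h => hz (mem_singleton_iff.mp h ▸ hw)
  set T := (fun w => argS1 (w - z)) '' Q
  have hTc : IsCompact T := hQ.isCompact.image_of_continuousOn hcont
  have hT : T = Icc (sInf T) (sSup T) :=
    eq_Icc_of_connected_compact ⟨hQne.image _, hQc.image _ hcont⟩ hTc
  have hTne : T.Nonempty := hQne.image _
  obtain ⟨m, hmQ, hm⟩ := hTc.sInf_mem hTne
  obtain ⟨M, hMQ, hM⟩ := hTc.sSup_mem hTne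
  have hpos : 0 < sInf T := by
    rw [← hm]
    refine (argS1_mem_Ico _).1.lt_of_ne fun h => hz ?_
    rwa [sub_eq_zero.mp (argS1_eq_zero_iff.mp h.symm)] at hmQ
  have hlt : sSup T < 1 := hM ▸ (argS1_mem_Ico _).2
  refine ⟨param z (sInf T), param z (sSup T), Set.ext fun w => ?_⟩
  rw [mem_closedArc_param_iff hpos (csInf_le_csSup hTne hTc.bddBelow hTc.bddAbove) hlt, ← hT]
  refine ⟨mem_image_of_mem _, fun ⟨v, hv, hvw⟩ => ?_⟩
  rwa [← sub_left_injective (argS1_injective hvw)]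

lemma exists_Ioo_param_image_subset {W : Set S1} {z a b : S1} (hW : IsOpen W)
    (hIW : closedArc a b ⊆ W) (hz : z ∉ closedArc a b) :
    ∃ l u, 0 ≤ l ∧ l < argS1 (a - z) ∧ argS1 (b - z) < u ∧ u ≤ 1 ∧ param z '' Ioo l u ⊆ W := by
  obtain ⟨hP0, -, hmem⟩ := mem_closedArc_iff_of_notMem hz
  have hnhds : ∀ w ∈ closedArc a b, param z ⁻¹' W ∈ 𝓝 (argS1 (w - z)) := fun w hw =>
    (hW.preimage (continuous_param z)).mem_nhds (by rw [mem_preimage, param_argS1]; exact hIW hw)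
  obtain ⟨l, hl, hlW⟩ := exists_Ioc_subset_of_mem_nhds' (hnhds a (left_mem_closedArc a b)) hP0
  obtain ⟨u, hu, huW⟩ := exists_Ico_subset_of_mem_nhds' (hnhds b (right_mem_closedArc a b))
    (argS1_mem_Ico (b - z)).2
  refine ⟨l, u, hl.1, hl.2, hu.1, hu.2, ?_⟩
  rintro - ⟨t, ht, rfl⟩
  rcases le_or_gt t (argS1 (a - z)) with h | h
  · exact hlW ⟨ht.1, h⟩
  rcases le_or_gt t (argS1 (b - z)) with h' | h'
  · refine hIW ((hmem _).mpr ?_)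
    rw [argS1_param ⟨hl.1.trans ht.1.le, ht.2.trans_le hu.2⟩]
    exact ⟨h.le, h'⟩
  · exact huW ⟨h'.le, ht.2⟩

/-- In a chart at `z ∉ W`, the open set `W` contains a little more than the arc on both sides,
and the preconnected `G` can only lie on one of the two sides. -/
lemma exists_isPreconnected_extension {W G : Set S1} {z a b : S1} (hW : IsOpen W)
    (hzW : z ∉ W) (hIW : closedArc a b ⊆ W) (hG : IsPreconnected G) (hzG : z ∉ G)
    (hGI : Disjoint G (closedArc a b)) :
    ∃ S, IsPreconnected S ∧ closedArc a b ⊆ S ∧ S ⊆ W ∧ Disjoint S G ∧ ¬ S ⊆ closedArc a b := by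
  have hz : z ∉ closedArc a b := fun h => hzW (hIW h)
  obtain ⟨hP0, hPQ, hmem⟩ := mem_closedArc_iff_of_notMem hz
  obtain ⟨l, u, hl0, hlP, hQu, hu1, hluW⟩ := exists_Ioo_param_image_subset hW hIW hz
  set P := argS1 (a - z)
  set Q := argS1 (b - z)
  have harg : ∀ t ∈ Ioo l u, argS1 (param z t - z) = t := fun t ht =>
    argS1_param ⟨hl0.trans ht.1.le, ht.2.trans_le hu1⟩
  have hextend : ∀ J ⊆ Ioo l u, IsPreconnected J → Icc P Q ⊆ J → (∃ t ∈ J, t ∉ Icc P Q) →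
      (∀ t ∈ J, param z t ∉ G) →
      ∃ S, IsPreconnected S ∧ closedArc a b ⊆ S ∧ S ⊆ W ∧ Disjoint S G ∧
        ¬ S ⊆ closedArc a b := by
    intro J hJ hJc hPQJ ⟨t₀, ht₀J, ht₀⟩ hJG
    refine ⟨param z '' J, hJc.image _ (continuous_param z).continuousOn,
      fun w hw => ⟨_, hPQJ ((hmem w).mp hw), param_argS1 z w⟩,
      (image_mono hJ).trans hluW, disjoint_left.mpr ?_, fun h => ht₀ ?_⟩
    · rintro - ⟨t, ht, rfl⟩
      exact hJG t ht
    · rw [← harg t₀ (hJ ht₀J)]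
      exact (hmem _).mp (h ⟨t₀, ht₀J, rfl⟩)
  have hG_ne : ∀ g ∈ G, argS1 (g - z) ≠ P := fun g hg h =>
    disjoint_left.mp hGI hg ((hmem g).mpr (by rw [h]; exact ⟨le_rfl, hPQ⟩))
  rcases hG.mapsTo_Ioi_or_Iio
    ((continuousOn_argS1_sub z).mono fun g hg h => hzG (mem_singleton_iff.mp h ▸ hg)) hG_ne
    with hright | hleft
  · refine hextend (Ioc l Q) (fun t ht => ⟨ht.1, ht.2.trans_lt hQu⟩) isPreconnected_Ioc
      (Icc_subset_Ioc_left hlP) ⟨(l + P) / 2, ⟨by linarith, by linarith⟩,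
        fun h => by linarith [h.1]⟩ fun t ht htG => ?_
    have ht' := harg t ⟨ht.1, ht.2.trans_lt hQu⟩
    refine disjoint_left.mp hGI htG ((hmem _).mpr ?_)
    rw [ht']
    exact ⟨(ht' ▸ hright htG : P < t).le, ht.2⟩
  · refine hextend (Ico P u) (fun t ht => ⟨hlP.trans_le ht.1, ht.2⟩) isPreconnected_Ico
      (Icc_subset_Ico_right hQu) ⟨(Q + u) / 2, ⟨by linarith, by linarith⟩,
        fun h => by linarith [h.2]⟩ fun t ht htG => ?_
    exact absurd ht.1 (not_le.mpr (harg t ⟨hlP.trans_le ht.1, ht.2⟩ ▸ hleft htG))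

instance : LocallyPathConnectedSpace S1 := Quotient.locallyPathConnectedSpace

def IsArcAvoiding (K L I : Set S1) : Prop :=
  (∃ x ∈ K, ∃ y ∈ K, I = closedArc x y) ∧ Disjoint I L

variable {K L : Set S1}

lemma IsArcAvoiding.subset_compl_gapUnion {I : Set S1} (hI : IsArcAvoiding K L I) :
    I ⊆ (gapUnion K L)ᶜ := by
  obtain ⟨⟨x, hx, y, hy, rfl⟩, hIL⟩ := hI
  exact subset_compl_iff_disjoint_right.mpr (disjoint_gapUnion_of_frontier_subset
    ((frontier_closedArc_subset x y).trans (insert_subset hx (singleton_subset_iff.mpr hy))) hIL)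

lemma maximal_connectedComponentIn (hK : IsClosed K) (hLne : L.Nonempty)
    (hKL : Disjoint K L) {c : S1} (hc : c ∈ (gapUnion K L)ᶜ) :
    Maximal (IsArcAvoiding K L) (connectedComponentIn (gapUnion K L)ᶜ c) := by
  set Q := connectedComponentIn (gapUnion K L)ᶜ c
  have hQC : Q ⊆ (gapUnion K L)ᶜ := connectedComponentIn_subset _ _
  have hQL : Disjoint Q L :=
    disjoint_compl_left.mono hQC (subset_gapUnion hKL)
  obtain ⟨l, hl⟩ := hLne
  obtain ⟨a, b, hQ⟩ := exists_eq_closedArc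
    (isClosed_connectedComponentIn (isOpen_gapUnion hK).isClosed_compl c)
    isPreconnected_connectedComponentIn ⟨c, mem_connectedComponentIn hc⟩
    (disjoint_right.mp hQL hl)
  have hfr := frontier_connectedComponentIn_compl_gapUnion_subset (L := L) hK c
  rw [hQ] at hfr
  refine ⟨⟨⟨a, hfr (mem_frontier_closedArc a b).1, b, hfr (mem_frontier_closedArc a b).2, hQ⟩,
    hQL⟩, fun J hJ hQJ => ?_⟩
  have hJC := hJ.subset_compl_gapUnion
  obtain ⟨⟨x, -, y, -, rfl⟩, -⟩ := hJ
  exact (isPreconnected_closedArc x y).subset_connectedComponentIn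
    (hQJ (mem_connectedComponentIn hc)) hJC

lemma Maximal.eq_connectedComponentIn (hK : IsClosed K) (hLne : L.Nonempty)
    (hKL : Disjoint K L) {I : Set S1} (hI : Maximal (IsArcAvoiding K L) I) {x : S1}
    (hx : x ∈ I) : I = connectedComponentIn (gapUnion K L)ᶜ x := by
  have hIC := hI.prop.subset_compl_gapUnion
  obtain ⟨⟨a, -, b, -, rfl⟩, -⟩ := hI.prop
  exact hI.eq_of_subset (maximal_connectedComponentIn hK hLne hKL (hIC hx)).prop
    ((isPreconnected_closedArc a b).subset_connectedComponentIn hx hIC)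

lemma exists_image_mem_connectedComponentIn (f : HomS1) (hK : IsClosed K) (hKne : K.Nonempty)
    (hL : IsClosed L) (hLne : L.Nonempty) (hKL : Disjoint K L) (hfK : f '' K ⊆ K)
    (hfL : f '' L ⊆ L) {x : S1} (hx : x ∈ (gapUnion K L)ᶜ) :
    ∃ c ∈ (gapUnion K L)ᶜ, f c ∈ connectedComponentIn (gapUnion K L)ᶜ x := by
  by_contra! hmiss
  obtain ⟨⟨a, -, b, -, hQ⟩, -⟩ := (maximal_connectedComponentIn hK hLne hKL hx).prop
  rw [hQ] at hmiss
  have hxQ : x ∈ closedArc a b := hQ ▸ mem_connectedComponentIn hx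
  have hfU : f.symm x ∈ gapUnion K L := by_contra fun h => hmiss _ h (by simpa using hxQ)
  obtain ⟨l, hl, hxl⟩ := mem_iUnion₂.mp hfU
  have hQW : closedArc a b ⊆ f '' connectedComponentIn Kᶜ l := by
    rw [connectedComponentIn_eq hxl, f.image_connectedComponentIn
      (connectedComponentIn_subset _ _ hxl), f.image_compl, f.apply_symm_apply]
    refine (isPreconnected_closedArc a b).subset_connectedComponentIn hxQ ?_
    rintro - hq ⟨k, hk, rfl⟩
    exact hmiss k (disjoint_left.mp disjoint_gapUnion hk) hq
  obtain ⟨k, hk⟩ := hKne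
  have hfl : f l ∈ L := hfL (mem_image_of_mem f hl)
  obtain ⟨S, hS, hQS, hSW, hSG, hSQ⟩ := exists_isPreconnected_extension
    (f.isOpenMap _ hK.isOpen_compl.connectedComponentIn)
    (by
      rintro ⟨y, hy, hyk⟩
      exact absurd (f.injective hyk ▸ hk) (connectedComponentIn_subset _ _ hy))
    hQW isPreconnected_connectedComponentIn
    (fun h => absurd (hfK (mem_image_of_mem f hk)) (connectedComponentIn_subset _ _ h))
    (hQ ▸ disjoint_compl_right.mono (subset_biUnion_of_mem
      (u := fun l => connectedComponentIn Kᶜ l) hfl) (connectedComponentIn_subset _ _))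
  have hSC : S ⊆ (gapUnion K L)ᶜ := fun s hs hsU =>
    disjoint_left.mp hSG hs (image_connectedComponentIn_inter_gapUnion_subset f hK
      hL.isCompact hKL hfK hfL hl ⟨hSW hs, hsU⟩)
  exact hSQ (hQ ▸ hS.subset_connectedComponentIn (hQS hxQ) hSC)

end CircleArc

open CircleArc

section MinimalSets

lemma IsMinimalInvariant.disjoint {F : Set HomS1} {K K' : Set S1}
    (hK : IsMinimalInvariant F K) (hK' : IsMinimalInvariant F K') (hne : K ≠ K') :
    Disjoint K K' := by
  by_contra h
  have hinv : InvariantUnder F (K ∩ K') := fun f hf => (image_inter_subset f K K').trans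
    (inter_subset_inter (hK.2.2.1 f hf) (hK'.2.2.1 f hf))
  have hcl := hK.2.1.inter hK'.2.1
  have hne' := not_disjoint_iff_nonempty_inter.mp h
  exact hne ((hK.2.2.2 _ inter_subset_left hne' hcl hinv).symm.trans
    (hK'.2.2.2 _ inter_subset_right hne' hcl hinv))

def otherMinimalUnion (F : Set HomS1) (K : Set S1) : Set S1 := ⋃₀ (minimalSets F \ {K})

variable {F : Set HomS1} {K : Set S1}

lemma isClosed_otherMinimalUnion (hfin : (minimalSets F).Finite) :
    IsClosed (otherMinimalUnion F K) := by
  rw [otherMinimalUnion, sUnion_eq_biUnion]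
  exact (hfin.subset sdiff_subset).isClosed_biUnion fun _ hK' => hK'.1.2.1

lemma nonempty_otherMinimalUnion (hcard : 2 ≤ (minimalSets F).ncard) :
    (otherMinimalUnion F K).Nonempty := by
  obtain ⟨K', hK', hne⟩ := exists_ne_of_one_lt_ncard hcard K
  obtain ⟨w, hw⟩ := (hK' : IsMinimalInvariant F K').1
  exact ⟨w, K', ⟨hK', hne⟩, hw⟩

lemma disjoint_otherMinimalUnion (hK : K ∈ minimalSets F) : Disjoint K (otherMinimalUnion F K) :=
  disjoint_sUnion_right.mpr fun _ hK' => hK.disjoint hK'.1 (Ne.symm hK'.2)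

lemma image_otherMinimalUnion_subset {f : HomS1} (hf : f ∈ F) :
    f '' otherMinimalUnion F K ⊆ otherMinimalUnion F K := by
  rintro - ⟨w, ⟨K', hK', hw⟩, rfl⟩
  exact ⟨K', hK', hK'.1.2.2.1 f hf (mem_image_of_mem f hw)⟩

lemma mem_EK_iff {I : Set S1} :
    I ∈ EK F K ↔ Maximal (IsArcAvoiding K (otherMinimalUnion F K)) I := by
  have hgap : IsGapArc F K = IsArcAvoiding K (otherMinimalUnion F K) := by
    ext J
    refine and_congr_right' ⟨fun h => disjoint_sUnion_right.mpr fun K' hK' =>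
      disjoint_iff_inter_eq_empty.mpr (h K' hK'.1 hK'.2), fun h K' hK' hne =>
      disjoint_iff_inter_eq_empty.mp (disjoint_sUnion_right.mp h K' ⟨hK', hne⟩)⟩
  rw [← hgap]
  exact ⟨fun h => ⟨h.1, fun J hJ hIJ => (h.2 J hJ hIJ).le⟩,
    fun h => ⟨h.1, fun J hJ hIJ => h.eq_of_superset hJ hIJ⟩⟩

end MinimalSets

/-- **Lemma 3.3.** If the collection of `F`-invariant minimal sets is finite with at
least two elements, then for every minimal set `K`, every arc `I ∈ E_K` and every
`f ∈ F`, `f` maps `I` into some arc of `E_K` and maps some arc of `E_K` into `I`. -/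
theorem statement6 (F : Set HomS1) (hfin : (minimalSets F).Finite)
    (hcard : 2 ≤ (minimalSets F).ncard) :
    ∀ K ∈ minimalSets F, ∀ I ∈ EK F K, ∀ f ∈ F,
      (∃ J ∈ EK F K, f '' I ⊆ J) ∧ (∃ J ∈ EK F K, f '' J ⊆ I) := by
  intro K hK I hI f hf
  set L := otherMinimalUnion F K
  have hKcl : IsClosed K := hK.2.1
  have hLcl : IsClosed L := isClosed_otherMinimalUnion hfin
  have hLne : L.Nonempty := nonempty_otherMinimalUnion hcard
  have hKL : Disjoint K L := disjoint_otherMinimalUnion hK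
  have hfK : f '' K ⊆ K := hK.2.2.1 f hf
  have hfL : f '' L ⊆ L := image_otherMinimalUnion_subset hf
  have hmaps {c} (hc : c ∈ (gapUnion K L)ᶜ) := image_connectedComponentIn_compl_gapUnion_subset f
    hKcl hLcl.isCompact hKL hfK hfL hc
  simp only [mem_EK_iff] at hI ⊢
  obtain ⟨⟨x, -, y, -, rfl⟩, -⟩ := hI.prop
  have hxC := hI.prop.subset_compl_gapUnion (left_mem_closedArc x y)
  rw [hI.eq_connectedComponentIn hKcl hLne hKL (left_mem_closedArc x y)]
  constructor
  · have hfxC := image_compl_gapUnion_subset f hKcl hLcl.isCompact hKL hfK hfL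
      (mem_image_of_mem f hxC)
    exact ⟨_, maximal_connectedComponentIn hKcl hLne hKL hfxC, hmaps hxC⟩
  · obtain ⟨c, hc, hfc⟩ :=
      exists_image_mem_connectedComponentIn f hKcl hK.1 hLcl hLne hKL hfK hfL hxC
    exact ⟨_, maximal_connectedComponentIn hKcl hLne hKL hc, connectedComponentIn_eq hfc ▸ hmaps hc⟩
end
end

section
/- Let (F,ν) be an RDS of circle homeomorphisms without finite orbits, let d be the number of ergodic stationary measures, and let u_1,…,u_d be the weight maps. Then for every i ∈ {1,…,d}, the sets {x ∈ S¹ : u_i(x) = 0} and {x ∈ S¹ : u_i(x) = 1} are F-invariant (i.e., mapped into themselves by every f ∈ F). -/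
/-!
Each weight map `u_i` is harmonic for the transfer operator `P`. Indeed, one step of the chain
shifts the Cesàro averages defining `m_x = ∑ u_j(x) μ_j` by `O(1/N)`, so `m_x` equals
`∑ (P u_j)(x) μ_j`, and the coefficients of the two combinations agree because distinct ergodic
stationary measures are mutually singular. A nonnegative continuous harmonic function `v` with
`v x = 0` has `∫ v (f x) dν(f) = 0`, so it vanishes at `f x` for every `f` in the support of
`ν`: otherwise `f ↦ v (f x)` would be positive on an open set of positive measure. Apply this to
`u_i` and to `1 - u_i`.
-/

open MeasureTheory Set Function Filter Topology
open scoped ENNReal NNReal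

noncomputable section

/-- Topology on the homeomorphism group of the circle: induced by the compact-open
topologies on the map and on its inverse. -/
instance : TopologicalSpace HomS1 :=
  TopologicalSpace.induced
    (fun f : HomS1 => ((f : C(S1, S1)), ((f.symm : C(S1, S1))))) inferInstance

instance : MeasurableSpace HomS1 := borel HomS1
instance : BorelSpace HomS1 := ⟨rfl⟩

/-- The topological support of a measure. -/
def measSupport {α : Type*} [TopologicalSpace α] [MeasurableSpace α]
    (μ : Measure α) : Set α :=
  {x | ∀ U : Set α, IsOpen U → x ∈ U → 0 < μ U}

/-- A probability measure `μ` on the circle is stationary for the RDS given by `ν`,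
i.e. `μ = ∫ f_* μ dν(f)` (equivalently, `ν^ℕ ⊗ μ` is invariant under the skew shift). -/
def IsStationaryMeasure (ν : Measure HomS1) (μ : Measure S1) : Prop :=
  IsProbabilityMeasure μ ∧
    ∀ A : Set S1, MeasurableSet A → μ A = ∫⁻ f : HomS1, μ (⇑f ⁻¹' A) ∂ν

/-- A stationary measure is ergodic iff it is an extreme point of the convex set
of stationary probability measures (equivalently, `ν^ℕ ⊗ μ` is ergodic for the
skew shift). -/
def IsErgodicStationaryMeasure (ν : Measure HomS1) (μ : Measure S1) : Prop :=
  IsStationaryMeasure ν μ ∧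
    ∀ μ₁ μ₂ : Measure S1, IsStationaryMeasure ν μ₁ → IsStationaryMeasure ν μ₂ →
      ∀ t : ℝ≥0∞, 0 < t → t < 1 → μ = t • μ₁ + (1 - t) • μ₂ → μ₁ = μ ∧ μ₂ = μ

/-- One step of the Markov chain: the law of `f x` with `f ∼ ν`, `x ∼ μ`. -/
def stepM (ν : Measure HomS1) (μ : Measure S1) : Measure S1 :=
  (ν.prod μ).map fun p => p.1 p.2

/-- The `n`-step distribution of the Markov chain started at `x`. -/
def iterM (ν : Measure HomS1) (x : S1) (n : ℕ) : Measure S1 :=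
  (stepM ν)^[n] (Measure.dirac x)

/-- The Cesàro average `(1/N) ∑_{n<N} ∫ δ_{f_ω^n(x)} dν^ℕ(ω)` of the
transfer-operator orbit of `δ_x`, tested against the continuous function `g`. -/
def cesaroInt (ν : Measure HomS1) (x : S1) (g : C(S1, ℝ)) (N : ℕ) : ℝ :=
  (N : ℝ)⁻¹ * ∑ n ∈ Finset.range N, ∫ y, g y ∂(iterM ν x n)

/-- `μ` enumerates (without repetition) the ergodic stationary measures of the RDS `ν`;
in particular `d` is the number of ergodic stationary measures. -/
def IsErgodicEnumeration (ν : Measure HomS1) {d : ℕ} (μ : Fin d → Measure S1) : Prop :=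
  Function.Injective μ ∧ {m : Measure S1 | IsErgodicStationaryMeasure ν m} = Set.range μ

/-- `u` is the system of weight maps: continuous `[0,1]`-valued maps summing to `1`
such that for every `x` the Cesàro averages of the transfer-operator orbit of `δ_x`
converge weak-* to `m_x = ∑ i, u i x • μ i`. -/
def IsWeightSystem (ν : Measure HomS1) {d : ℕ} (μ : Fin d → Measure S1)
    (u : Fin d → S1 → ℝ) : Prop :=
  (∀ i, Continuous (u i)) ∧ (∀ i x, u i x ∈ Icc (0 : ℝ) 1) ∧
    (∀ x, ∑ i, u i x = 1) ∧
    ∀ (x : S1) (g : C(S1, ℝ)),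
      Tendsto (fun N => cesaroInt ν x g N) atTop (𝓝 (∑ i, u i x * ∫ y, g y ∂(μ i)))

/-- Indices `i` and `j` are neighbors: `{u_i > 0} ∩ {u_j > 0} ≠ ∅`. -/
def Neighbor {d : ℕ} (u : Fin d → S1 → ℝ) (i j : Fin d) : Prop :=
  ({x | 0 < u i x} ∩ {x | 0 < u j x}).Nonempty

/-- The inverse RDS: the pushforward of `ν` under `f ↦ f⁻¹`. -/
def invRDS (ν : Measure HomS1) : Measure HomS1 :=
  ν.map (fun f : HomS1 => f.symm)

theorem continuous_homS1_eval : Continuous fun p : HomS1 × S1 => p.1 p.2 :=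
  have hpair : Continuous fun f : HomS1 => ((f : C(S1, S1)), (f.symm : C(S1, S1))) :=
    continuous_induced_dom
  have hcoe : Continuous fun f : HomS1 => (f : C(S1, S1)) := hpair.fst
  (continuous_eval : Continuous fun p : C(S1, S1) × S1 => p.1 p.2).comp
    (hcoe.prodMap continuous_id)

theorem measurable_homS1_eval : Measurable fun p : HomS1 × S1 => p.1 p.2 :=
  continuous_homS1_eval.measurable

theorem continuous_homS1_apply (x : S1) : Continuous fun f : HomS1 => f x :=
  continuous_homS1_eval.comp (continuous_id.prodMk continuous_const)

theorem integrable_comp_apply (ν : Measure HomS1) [IsFiniteMeasure ν] (g : C(S1, ℝ)) (x : S1) :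
    Integrable (fun f : HomS1 => g (f x)) ν :=
  Integrable.of_bound (g.continuous.comp (continuous_homS1_apply x)).aestronglyMeasurable ‖g‖
    (ae_of_all _ fun f => g.norm_coe_le_norm (f x))

section StepM

variable {ν : Measure HomS1}

theorem stepM_apply (m : Measure S1) [SFinite m] {A : Set S1} (hA : MeasurableSet A) :
    stepM ν m A = ∫⁻ f, m (⇑f ⁻¹' A) ∂ν := by
  rw [stepM, Measure.map_apply measurable_homS1_eval hA,
    Measure.prod_apply (measurable_homS1_eval hA)]
  rfl

theorem stepM_univ [IsProbabilityMeasure ν] (m : Measure S1) [SFinite m] :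
    stepM ν m univ = m univ := by
  simp [stepM_apply m MeasurableSet.univ]

theorem stepM_mono {m m' : Measure S1} [SFinite m'] (h : m ≤ m') : stepM ν m ≤ stepM ν m' :=
  Measure.map_mono (Measure.prod_mono le_rfl h) measurable_homS1_eval

theorem stepM_add [SFinite ν] (m m' : Measure S1) [SFinite m] [SFinite m'] :
    stepM ν (m + m') = stepM ν m + stepM ν m' := by
  rw [stepM, stepM, stepM, Measure.prod_add, Measure.map_add _ _ measurable_homS1_eval]

theorem stepM_smul (c : ℝ≥0∞) (m : Measure S1) [SFinite m] :
    stepM ν (c • m) = c • stepM ν m := by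
  rw [stepM, stepM, Measure.prod_smul_right, Measure.map_smul]

theorem stepM_sub [SFinite ν] {m e : Measure S1} [IsFiniteMeasure m] (hle : e ≤ m)
    (hm : stepM ν m = m) (he : stepM ν e = e) : stepM ν (m - e) = m - e := by
  have : IsFiniteMeasure e := isFiniteMeasure_of_le m hle
  have hsum := stepM_add (ν := ν) (m - e) e
  rw [Measure.sub_add_cancel_of_le hle, hm, he] at hsum
  ext A hA
  have hsumA : m A = stepM ν (m - e) A + e A := congrArg (· A) hsum
  rw [Measure.sub_apply hA hle, hsumA, ENNReal.add_sub_cancel_right (measure_ne_top e A)]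

theorem isStationaryMeasure_iff {m : Measure S1} :
    IsStationaryMeasure ν m ↔ IsProbabilityMeasure m ∧ stepM ν m = m := by
  refine ⟨fun ⟨hprob, hstat⟩ => ⟨hprob, ?_⟩, fun ⟨hprob, hstat⟩ => ⟨hprob, fun A hA => ?_⟩⟩
  · ext A hA
    rw [stepM_apply m hA, hstat A hA]
  · rw [← stepM_apply m hA, hstat]

end StepM

section ErgodicStationary

variable {ν : Measure HomS1} [IsProbabilityMeasure ν]

theorem eq_smul_of_le_of_isErgodicStationaryMeasure {μ e : Measure S1}
    (hμ : IsErgodicStationaryMeasure ν μ) (hle : e ≤ μ) (he : stepM ν e = e) (he0 : e ≠ 0) :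
    e = e univ • μ := by
  obtain ⟨hμstat, hext⟩ := hμ
  obtain ⟨hμprob, hμfix⟩ := isStationaryMeasure_iff.mp hμstat
  have : IsFiniteMeasure e := isFiniteMeasure_of_le μ hle
  set c := e univ
  have hc0 : c ≠ 0 := Measure.measure_univ_ne_zero.mpr he0
  have hctop : c ≠ ∞ := measure_ne_top e univ
  have hc1 : c ≤ 1 := (hle univ).trans_eq measure_univ
  rcases hc1.eq_or_lt with hc1 | hc1
  · rw [hc1, one_smul]
    exact Measure.eq_of_le_of_measure_univ_eq hle (hc1.trans measure_univ.symm)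
  have h1c0 : 1 - c ≠ 0 := (tsub_pos_of_lt hc1).ne'
  have h1ctop : 1 - c ≠ ∞ := ENNReal.sub_ne_top ENNReal.one_ne_top
  have hp : IsStationaryMeasure ν (c⁻¹ • e) := by
    refine isStationaryMeasure_iff.mpr ⟨⟨?_⟩, by rw [stepM_smul, he]⟩
    rw [Measure.smul_apply, smul_eq_mul, ENNReal.inv_mul_cancel hc0 hctop]
  have hq : IsStationaryMeasure ν ((1 - c)⁻¹ • (μ - e)) := by
    refine isStationaryMeasure_iff.mpr ⟨⟨?_⟩, by rw [stepM_smul, stepM_sub hle hμfix he]⟩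
    rw [Measure.smul_apply, smul_eq_mul, Measure.sub_apply MeasurableSet.univ hle, measure_univ,
      ENNReal.inv_mul_cancel h1c0 h1ctop]
  have hdecomp : μ = c • (c⁻¹ • e) + (1 - c) • ((1 - c)⁻¹ • (μ - e)) := by
    rw [smul_smul, smul_smul, ENNReal.mul_inv_cancel hc0 hctop,
      ENNReal.mul_inv_cancel h1c0 h1ctop, one_smul, one_smul, add_comm,
      Measure.sub_add_cancel_of_le hle]
  obtain ⟨hpμ, -⟩ := hext _ _ hp hq c (pos_iff_ne_zero.mpr hc0) hc1 hdecomp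
  rw [← hpμ, smul_smul, ENNReal.mul_inv_cancel hc0 hctop, one_smul]

/-- The infimum `μ₁ ⊓ μ₂` is sub-stationary of the same mass, hence stationary; by extremality
it is a common multiple of `μ₁` and `μ₂`, so it vanishes unless `μ₁ = μ₂`. -/
theorem IsErgodicStationaryMeasure.mutuallySingular {μ₁ μ₂ : Measure S1}
    (h₁ : IsErgodicStationaryMeasure ν μ₁) (h₂ : IsErgodicStationaryMeasure ν μ₂)
    (hne : μ₁ ≠ μ₂) : μ₁ ⟂ₘ μ₂ := by
  obtain ⟨hprob₁, hfix₁⟩ := isStationaryMeasure_iff.mp h₁.1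
  obtain ⟨hprob₂, hfix₂⟩ := isStationaryMeasure_iff.mp h₂.1
  set m := μ₁ ⊓ μ₂
  have : IsFiniteMeasure m := isFiniteMeasure_of_le μ₁ inf_le_left
  have hsub : stepM ν m ≤ m :=
    le_inf (hfix₁ ▸ stepM_mono inf_le_left) (hfix₂ ▸ stepM_mono inf_le_right)
  have : IsFiniteMeasure (stepM ν m) := isFiniteMeasure_of_le m hsub
  have hfix : stepM ν m = m := Measure.eq_of_le_of_measure_univ_eq hsub (stepM_univ m)
  refine Measure.mutuallySingular_of_disjoint (disjoint_iff.mpr ?_)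
  by_contra hm0
  have hm1 := eq_smul_of_le_of_isErgodicStationaryMeasure h₁ inf_le_left hfix hm0
  have hm2 := eq_smul_of_le_of_isErgodicStationaryMeasure h₂ inf_le_right hfix hm0
  have hc0 : m univ ≠ 0 := Measure.measure_univ_ne_zero.mpr hm0
  have hctop : m univ ≠ ∞ := measure_ne_top m univ
  refine hne (Measure.ext fun A _ => (ENNReal.mul_right_inj hc0 hctop).mp ?_)
  simpa using congrArg (· A) (hm1.symm.trans hm2)

end ErgodicStationary

section Transfer

variable (ν : Measure HomS1) [IsProbabilityMeasure ν]

def transferOp (g : C(S1, ℝ)) : C(S1, ℝ) where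
  toFun y := ∫ f, g (f y) ∂ν
  continuous_toFun := continuous_of_dominated
    (fun y => (g.continuous.comp (continuous_homS1_apply y)).aestronglyMeasurable)
    (fun y => ae_of_all _ fun f => g.norm_coe_le_norm (f y)) (integrable_const ‖g‖)
    (ae_of_all _ fun f => g.continuous.comp f.continuous)

theorem transferOp_apply (g : C(S1, ℝ)) (y : S1) : transferOp ν g y = ∫ f, g (f y) ∂ν := rfl

theorem norm_transferOp_le (g : C(S1, ℝ)) : ‖transferOp ν g‖ ≤ ‖g‖ := by
  refine (ContinuousMap.norm_le _ (norm_nonneg g)).mpr fun y => ?_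
  simpa [transferOp_apply] using norm_integral_le_of_norm_le_const (μ := ν)
    (ae_of_all _ fun f => g.norm_coe_le_norm (f y))

theorem norm_transferOp_iterate_le (n : ℕ) (g : C(S1, ℝ)) : ‖(transferOp ν)^[n] g‖ ≤ ‖g‖ := by
  induction n generalizing g with
  | zero => exact le_rfl
  | succ n ih => exact (ih _).trans (norm_transferOp_le ν g)

theorem integral_stepM (m : Measure S1) [IsFiniteMeasure m] (g : C(S1, ℝ)) :
    ∫ y, g y ∂(stepM ν m) = ∫ y, transferOp ν g y ∂m := by
  have hint : Integrable (fun p : HomS1 × S1 => g (p.1 p.2)) (ν.prod m) :=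
    Integrable.of_bound (g.continuous.comp continuous_homS1_eval).aestronglyMeasurable ‖g‖
      (ae_of_all _ fun p => g.norm_coe_le_norm _)
  rw [stepM, integral_map measurable_homS1_eval.aemeasurable g.continuous.aestronglyMeasurable,
    integral_prod_symm _ hint]
  rfl

instance isProbabilityMeasure_iterM (x : S1) (n : ℕ) : IsProbabilityMeasure (iterM ν x n) := by
  induction n with
  | zero => exact Measure.dirac.isProbabilityMeasure
  | succ n ih =>
    have : IsProbabilityMeasure ((stepM ν)^[n] (Measure.dirac x)) := ih
    rw [iterM, Function.iterate_succ_apply']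
    exact Measure.isProbabilityMeasure_map measurable_homS1_eval.aemeasurable

theorem integral_iterM (x : S1) (n : ℕ) (g : C(S1, ℝ)) :
    ∫ y, g y ∂(iterM ν x n) = ((transferOp ν)^[n] g) x := by
  induction n generalizing g with
  | zero => simp [iterM]
  | succ n ih =>
    rw [iterM, Function.iterate_succ_apply', ← iterM, integral_stepM, ih,
      Function.iterate_succ_apply]

theorem cesaroInt_eq (x : S1) (g : C(S1, ℝ)) (N : ℕ) :
    cesaroInt ν x g N = (N : ℝ)⁻¹ * ∑ n ∈ Finset.range N, ((transferOp ν)^[n] g) x := by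
  simp only [cesaroInt, integral_iterM]

theorem abs_cesaroInt_le (x : S1) (g : C(S1, ℝ)) (N : ℕ) : |cesaroInt ν x g N| ≤ ‖g‖ := by
  rw [cesaroInt_eq, abs_mul, abs_inv, Nat.abs_cast]
  rcases N.eq_zero_or_pos with rfl | hN
  · simp
  have hsum : |∑ n ∈ Finset.range N, ((transferOp ν)^[n] g) x| ≤ N * ‖g‖ :=
    calc |∑ n ∈ Finset.range N, ((transferOp ν)^[n] g) x|
        ≤ ∑ n ∈ Finset.range N, ‖(transferOp ν)^[n] g‖ :=
          (Finset.abs_sum_le_sum_abs _ _).trans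
            (Finset.sum_le_sum fun n _ => ((transferOp ν)^[n] g).norm_coe_le_norm x)
      _ ≤ ∑ _n ∈ Finset.range N, ‖g‖ :=
          Finset.sum_le_sum fun n _ => norm_transferOp_iterate_le ν n g
      _ = N * ‖g‖ := by simp
  calc (N : ℝ)⁻¹ * |∑ n ∈ Finset.range N, ((transferOp ν)^[n] g) x|
      ≤ (N : ℝ)⁻¹ * (N * ‖g‖) := by gcongr
    _ = ‖g‖ := by field_simp

theorem continuous_cesaroInt (g : C(S1, ℝ)) (N : ℕ) : Continuous fun x => cesaroInt ν x g N := by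
  simp only [cesaroInt_eq]
  fun_prop

theorem integral_cesaroInt_comp (x : S1) (g : C(S1, ℝ)) (N : ℕ) :
    ∫ f, cesaroInt ν (f x) g N ∂ν =
      cesaroInt ν x g N + (N : ℝ)⁻¹ * (((transferOp ν)^[N] g) x - g x) := by
  have hshift : ∀ n, ∫ f, ((transferOp ν)^[n] g) (f x) ∂ν = ((transferOp ν)^[n + 1] g) x :=
    fun n => by rw [Function.iterate_succ_apply', transferOp_apply]
  have htelescope : ∑ n ∈ Finset.range N, ((transferOp ν)^[n + 1] g) x =
      ∑ n ∈ Finset.range N, ((transferOp ν)^[n] g) x + (((transferOp ν)^[N] g) x - g x) := by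
    have hfirst := Finset.sum_range_succ' (fun n => ((transferOp ν)^[n] g) x) N
    have hlast := Finset.sum_range_succ (fun n => ((transferOp ν)^[n] g) x) N
    simp only [Function.iterate_zero, id] at hfirst
    linarith
  simp only [cesaroInt_eq]
  rw [integral_const_mul, integral_finsetSum _ fun n _ => integrable_comp_apply ν _ x]
  simp only [hshift, htelescope]
  ring

end Transfer

def IsHarmonic (ν : Measure HomS1) (v : S1 → ℝ) : Prop := ∀ x, v x = ∫ f, v (f x) ∂ν

theorem isHarmonic_of_tendsto_cesaroInt {ν : Measure HomS1} [IsProbabilityMeasure ν]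
    {g : C(S1, ℝ)} {L : S1 → ℝ}
    (hL : ∀ x, Tendsto (fun N => cesaroInt ν x g N) atTop (𝓝 (L x))) : IsHarmonic ν L := by
  intro x
  have herror : Tendsto (fun N : ℕ => (N : ℝ)⁻¹ * (((transferOp ν)^[N] g) x - g x)) atTop
      (𝓝 0) := by
    refine squeeze_zero_norm (fun N => ?_)
      (by simpa using tendsto_inv_atTop_nhds_zero_nat.mul_const (2 * ‖g‖))
    rw [norm_mul, norm_inv, RCLike.norm_natCast]
    gcongr
    calc ‖((transferOp ν)^[N] g) x - g x‖ ≤ ‖(transferOp ν)^[N] g‖ + ‖g‖ :=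
          (norm_sub_le _ _).trans (add_le_add (ContinuousMap.norm_coe_le_norm _ x)
            (g.norm_coe_le_norm x))
      _ ≤ 2 * ‖g‖ := by linarith [norm_transferOp_iterate_le ν N g]
  have hlim₁ : Tendsto (fun N => ∫ f, cesaroInt ν (f x) g N ∂ν) atTop (𝓝 (L x)) := by
    simpa only [integral_cesaroInt_comp, add_zero] using (hL x).add herror
  have hlim₂ : Tendsto (fun N => ∫ f, cesaroInt ν (f x) g N ∂ν) atTop
      (𝓝 (∫ f, L (f x) ∂ν)) :=
    tendsto_integral_of_dominated_convergence (fun _ => ‖g‖)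
      (fun N => ((continuous_cesaroInt ν g N).comp
        (continuous_homS1_apply x)).aestronglyMeasurable)
      (integrable_const _) (fun N => ae_of_all _ fun f => abs_cesaroInt_le ν (f x) g N)
      (ae_of_all _ fun f => hL (f x))
  exact tendsto_nhds_unique hlim₁ hlim₂

theorem IsHarmonic.one_sub {ν : Measure HomS1} [IsProbabilityMeasure ν] {v : S1 → ℝ}
    (hv : IsHarmonic ν v) (hcont : Continuous v) : IsHarmonic ν fun x => 1 - v x := by
  intro x
  have hint : Integrable (fun f : HomS1 => v (f x)) ν := integrable_comp_apply ν ⟨v, hcont⟩ x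
  change 1 - v x = ∫ f, 1 - v (f x) ∂ν
  rw [integral_sub (integrable_const 1) hint, integral_const,
    probReal_univ, one_smul, ← hv x]

theorem eq_zero_of_mem_measSupport {α : Type*} [TopologicalSpace α] [MeasurableSpace α]
    {ρ : Measure α} {φ : α → ℝ} (hφ : Continuous φ) (hφ0 : 0 ≤ φ)
    (hint : Integrable φ ρ) (hzero : ∫ a, φ a ∂ρ = 0) {a : α} (ha : a ∈ measSupport ρ) :
    φ a = 0 := by
  by_contra hne
  have hae : φ =ᵐ[ρ] 0 := (integral_eq_zero_iff_of_nonneg hφ0 hint).mp hzero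
  have hnull : ρ {b | 0 < φ b} = 0 :=
    measure_mono_null (fun b (hb : 0 < φ b) => hb.ne') (ae_iff.mp hae)
  exact (ha _ (isOpen_lt continuous_const hφ) ((hφ0 a).lt_of_ne' hne)).ne' hnull

theorem IsHarmonic.apply_eq_zero {ν : Measure HomS1} [IsProbabilityMeasure ν] {v : S1 → ℝ}
    (hv : IsHarmonic ν v) (hcont : Continuous v) (hv0 : 0 ≤ v) {f₀ : HomS1}
    (hf₀ : f₀ ∈ measSupport ν) {x : S1} (hx : v x = 0) : v (f₀ x) = 0 :=
  eq_zero_of_mem_measSupport (φ := fun f : HomS1 => v (f x))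
    (hcont.comp (continuous_homS1_apply x)) (fun f => hv0 (f x))
    (integrable_comp_apply ν ⟨v, hcont⟩ x) ((hv x).symm.trans hx) hf₀

/-- Evaluate both sides on a set carrying `μ i` and null for every other `μ j`. -/
theorem coeff_eq_of_sum_smul_eq {α ι : Type*} [MeasurableSpace α] [Fintype ι]
    {μ : ι → Measure α} [∀ i, IsProbabilityMeasure (μ i)]
    (hsing : Pairwise fun i j => μ i ⟂ₘ μ j) {a b : ι → ℝ≥0}
    (h : ∑ j, a j • μ j = ∑ j, b j • μ j) (i : ι) : a i = b i := by
  classical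
  let T : ι → Set α := fun j => if hij : i = j then ∅ else (hsing hij).nullSet
  have hT : ∀ j, MeasurableSet (T j) := fun j => by
    by_cases hij : i = j <;> simp [T, hij, Measure.MutuallySingular.measurableSet_nullSet]
  set S := ⋂ j, (T j)ᶜ
  have hSi : μ i S = 1 := by
    rw [← prob_compl_eq_zero_iff (MeasurableSet.iInter fun j => (hT j).compl), compl_iInter]
    refine measure_iUnion_null fun j => ?_
    by_cases hij : i = j <;> simp [T, hij]
  have hSj : ∀ j, j ≠ i → μ j S = 0 := fun j hji =>
    measure_mono_null (iInter_subset _ j) (by simp [T, hji.symm])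
  have heval : ∀ c : ι → ℝ≥0, (∑ j, c j • μ j) S = c i := fun c => by
    rw [Measure.finsetSum_apply, Finset.sum_eq_single i (fun j _ hji => by simp [hSj j hji])
      (by simp)]
    simp [hSi]
  simpa [heval] using congrArg (· S) h

theorem integral_finsetSum_smul_measure {α ι : Type*} [MeasurableSpace α] [Fintype ι]
    {μ : ι → Measure α} {g : α → ℝ} (hg : ∀ j, Integrable g (μ j)) (c : ι → ℝ≥0) :
    ∫ y, g y ∂(∑ j, c j • μ j) = ∑ j, (c j : ℝ) * ∫ y, g y ∂(μ j) := by
  rw [integral_finsetSum_measure fun j _ => (hg j).smul_measure_nnreal]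
  simp only [integral_smul_nnreal_measure, NNReal.smul_def, smul_eq_mul]

theorem IsWeightSystem.isHarmonic {ν : Measure HomS1} [IsProbabilityMeasure ν] {d : ℕ}
    {μ : Fin d → Measure S1} {u : Fin d → S1 → ℝ} (hμ : IsErgodicEnumeration ν μ)
    (hu : IsWeightSystem ν μ u) (i : Fin d) : IsHarmonic ν (u i) := by
  have hergodic : ∀ j, IsErgodicStationaryMeasure ν (μ j) := fun j => by
    have hj : μ j ∈ Set.range μ := ⟨j, rfl⟩
    rwa [← hμ.2] at hj
  have : ∀ j, IsProbabilityMeasure (μ j) := fun j => (hergodic j).1.1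
  have hsing : Pairwise fun j k => μ j ⟂ₘ μ k := fun j k hjk =>
    (hergodic j).mutuallySingular (hergodic k) (hμ.1.ne hjk)
  intro x
  set w : Fin d → ℝ := fun j => ∫ f, u j (f x) ∂ν
  have hint : ∀ j, Integrable (fun f : HomS1 => u j (f x)) ν := fun j =>
    integrable_comp_apply ν ⟨u j, hu.1 j⟩ x
  have hw0 : ∀ j, 0 ≤ w j := fun j => integral_nonneg fun f => (hu.2.1 j (f x)).1
  have hmoments : ∀ g : C(S1, ℝ),
      ∑ j, u j x * ∫ y, g y ∂(μ j) = ∑ j, w j * ∫ y, g y ∂(μ j) := fun g => by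
    have hL : ∑ j, u j x * ∫ y, g y ∂(μ j) = ∫ f, ∑ j, u j (f x) * ∫ y, g y ∂(μ j) ∂ν :=
      isHarmonic_of_tendsto_cesaroInt (hu.2.2.2 · g) x
    rw [hL, integral_finsetSum _ fun j _ => (hint j).mul_const _]
    simp only [w, integral_mul_const]
  have hmeasures : ∑ j, (u j x).toNNReal • μ j = ∑ j, (w j).toNNReal • μ j := by
    refine ext_of_forall_integral_eq_of_IsFiniteMeasure fun g => ?_
    have hg : ∀ j, Integrable g (μ j) := fun j => g.integrable (μ j)
    rw [integral_finsetSum_smul_measure hg, integral_finsetSum_smul_measure hg]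
    simp only [Real.coe_toNNReal _ (hu.2.1 _ x).1, Real.coe_toNNReal _ (hw0 _)]
    exact hmoments g.toContinuousMap
  exact (Real.toNNReal_eq_toNNReal_iff (hu.2.1 i x).1 (hw0 i)).mp
    (coeff_eq_of_sum_smul_eq hsing hmeasures i)

theorem statement8_general (ν : Measure HomS1) [IsProbabilityMeasure ν] (F : Set HomS1)
    (hsupp : measSupport ν = F)
    (d : ℕ) (μ : Fin d → Measure S1) (hμ : IsErgodicEnumeration ν μ)
    (u : Fin d → S1 → ℝ) (hu : IsWeightSystem ν μ u) :
    ∀ i : Fin d,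
      InvariantUnder F {x | u i x = 0} ∧ InvariantUnder F {x | u i x = 1} := by
  intro i
  have hharm := hu.isHarmonic hμ i
  have hcont := hu.1 i
  subst hsupp
  refine ⟨?_, ?_⟩
  · rintro f hf _ ⟨x, hx, rfl⟩
    exact hharm.apply_eq_zero hcont (fun y => (hu.2.1 i y).1) hf hx
  · rintro f hf _ ⟨x, hx, rfl⟩
    have hcompl := (hharm.one_sub hcont).apply_eq_zero (continuous_const.sub hcont)
      (fun y => sub_nonneg.mpr (hu.2.1 i y).2) hf (sub_eq_zero.mpr (hx : u i x = 1).symm)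
    exact (sub_eq_zero.mp hcompl).symm

/-- **Lemma 4.1.** For an RDS of circle homeomorphisms without finite orbits with
weight maps `u_1, …, u_d`, the sets `{u_i = 0}` and `{u_i = 1}` are `F`-invariant. -/
theorem statement8 (ν : Measure HomS1) [IsProbabilityMeasure ν] (F : Set HomS1)
    (hsupp : measSupport ν = F) (hno : NoFiniteOrbit F)
    (d : ℕ) (μ : Fin d → Measure S1) (hμ : IsErgodicEnumeration ν μ)
    (u : Fin d → S1 → ℝ) (hu : IsWeightSystem ν μ u) :
    ∀ i : Fin d,
      InvariantUnder F {x | u i x = 0} ∧ InvariantUnder F {x | u i x = 1} :=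
  statement8_general ν F hsupp d μ hμ u hu

end
end
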